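/- arXiv:2208.03120 — 7 statements merged into one kernel-verified Lean document; each statement's English description precedes it below -/
import Mathlib

section
/- Weak duality for the entropy-regularized multi-marginal optimal transport problem: for every choice of entrywise positive dual vectors φ^k ∈ ℝ^{n_k} (k = 1,…,K) and every admissible transport plan Π ∈ Π(μ¹,…,μ^K), the Sinkhorn function value is bounded by the regularized primal objective, i.e. S(φ¹,…,φ^K) ≤ Σ_{i∈I} Π_i C_i + η Σ_{i∈I} Π_i (log Π_i − 1). -/
/-!
Writing `Φ_i = ∏ₖ φᵏ_{i_k}`, the marginal constraints turn the linear part of the Sinkhorn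
function into `η ∑ᵢ Πᵢ log Φᵢ`. The inequality then splits over `i` into the Fenchel–Young
inequality `t log a - a ≤ t (log t - 1)` for `x ↦ x log x - x`, applied with
`t = Πᵢ` and `a = 𝒦ᵢ Φᵢ`.
-/

open Finset Real

theorem mul_log_sub_le_mul_log_sub_one {t a : ℝ} (ht : 0 ≤ t) (ha : 0 < a) :
    t * log a - a ≤ t * (log t - 1) := by
  rcases ht.eq_or_lt with rfl | ht
  · simpa using ha.le
  · have hlog : log (a / t) ≤ a / t - 1 := log_le_sub_one_of_pos (div_pos ha ht)
    rw [log_div ha.ne' ht.ne'] at hlog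
    have hscaled : t * (log a - log t) ≤ a - t := by
      calc t * (log a - log t) ≤ t * (a / t - 1) := mul_le_mul_of_nonneg_left hlog ht.le
        _ = a - t := by field_simp
    linarith

theorem mul_log_sub_mul_exp_le {η t c Φ : ℝ} (hη : 0 < η) (ht : 0 ≤ t) (hΦ : 0 < Φ) :
    η * (t * log Φ) - η * (exp (-c / η) * Φ) ≤ t * c + η * (t * (log t - 1)) := by
  have hFY := mul_log_sub_le_mul_log_sub_one ht (mul_pos (exp_pos (-c / η)) hΦ)
  rw [log_mul (exp_pos _).ne' hΦ.ne', log_exp] at hFY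
  have hscaled := mul_le_mul_of_nonneg_left hFY hη.le
  have hcancel : η * (t * (-c / η + log Φ)) = η * (t * log Φ) - t * c := by
    field_simp
    ring
  rw [mul_sub, hcancel] at hscaled
  linarith

theorem sum_marginal_mul_eq_sum_mul_sum {R ι : Type*} [CommSemiring R] [Fintype ι]
    [DecidableEq ι] {α : ι → Type*} [∀ k, Fintype (α k)] [∀ k, DecidableEq (α k)]
    {T : (∀ k, α k) → R} {μ : ∀ k, α k → R}
    (hT : ∀ k j, (∑ i : ∀ k, α k, if i k = j then T i else 0) = μ k j) (f : ∀ k, α k → R) :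
    ∑ k, ∑ j, μ k j * f k j = ∑ i : ∀ k, α k, T i * ∑ k, f k (i k) := by
  simp only [← hT, sum_mul, ite_mul, zero_mul, mul_sum]
  rw [sum_comm (s := univ) (t := univ) (f := fun i k => T i * f k (i k))]
  refine sum_congr rfl fun k _ => ?_
  rw [sum_comm]
  exact sum_congr rfl fun i _ => by rw [sum_ite_eq, if_pos (mem_univ _)]

theorem weak_duality_entropy_regularized_MOT_general
    (K : ℕ) (n : Fin K → ℕ)
    (μ : ∀ k, Fin (n k) → ℝ)
    (C : (∀ k, Fin (n k)) → ℝ)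
    (η : ℝ) (hη : 0 < η)
    (φ : ∀ k, Fin (n k) → ℝ) (hφ : ∀ k j, 0 < φ k j)
    (T : (∀ k, Fin (n k)) → ℝ)
    (hT0 : ∀ i, 0 ≤ T i)
    (hTmarg : ∀ (k : Fin K) (j : Fin (n k)),
      (∑ i : ∀ k, Fin (n k), if i k = j then T i else 0) = μ k j) :
    η * (∑ k, ∑ j, μ k j * Real.log (φ k j))
      - η * (∑ i : ∀ k, Fin (n k), Real.exp (-C i / η) * ∏ k, φ k (i k))
    ≤ (∑ i : ∀ k, Fin (n k), T i * C i)
      + η * (∑ i : ∀ k, Fin (n k), T i * (Real.log (T i) - 1)) := by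
  have hlinear : ∑ k, ∑ j, μ k j * log (φ k j)
      = ∑ i : ∀ k, Fin (n k), T i * log (∏ k, φ k (i k)) := by
    rw [sum_marginal_mul_eq_sum_mul_sum hTmarg]
    refine sum_congr rfl fun i _ => ?_
    rw [log_prod fun k _ => (hφ k (i k)).ne']
  rw [hlinear, mul_sum, mul_sum, mul_sum, ← sum_sub_distrib, ← sum_add_distrib]
  exact sum_le_sum fun i _ =>
    mul_log_sub_mul_exp_le hη (hT0 i) (prod_pos fun k _ => hφ k (i k))

theorem weak_duality_entropy_regularized_MOT
    (K : ℕ) (n : Fin K → ℕ)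
    (μ : ∀ k, Fin (n k) → ℝ)
    (hμ0 : ∀ k j, 0 ≤ μ k j) (hμ1 : ∀ k, ∑ j, μ k j = 1)
    (C : (∀ k, Fin (n k)) → ℝ) (hC : ∀ i, 0 ≤ C i)
    (η : ℝ) (hη : 0 < η)
    (φ : ∀ k, Fin (n k) → ℝ) (hφ : ∀ k j, 0 < φ k j)
    (T : (∀ k, Fin (n k)) → ℝ)
    (hT0 : ∀ i, 0 ≤ T i)
    (hTmarg : ∀ (k : Fin K) (j : Fin (n k)),
      (∑ i : ∀ k, Fin (n k), if i k = j then T i else 0) = μ k j) :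
    η * (∑ k, ∑ j, μ k j * Real.log (φ k j))
      - η * (∑ i : ∀ k, Fin (n k), Real.exp (-C i / η) * ∏ k, φ k (i k))
    ≤ (∑ i : ∀ k, Fin (n k), T i * C i)
      + η * (∑ i : ∀ k, Fin (n k), T i * (Real.log (T i) - 1)) :=
  weak_duality_entropy_regularized_MOT_general K n μ C η hη φ hφ T hT0 hTmarg
end

section
/- Recovery of the optimal plan from optimal dual vectors (Proposition 3.3): if entrywise positive vectors φ̂^k ∈ ℝ^{n_k}, k = 1,…,K, maximize the Sinkhorn function S over all entrywise positive dual vectors, then the tensor Π̂ defined by Π̂_i = 𝒦_i ∏_{k=1}^K φ̂^k_{i_k} is an admissible plan, Π̂ ∈ Π(μ¹,…,μ^K), and Π̂ minimizes the regularized objective Σ_{i∈I} Π_i C_i + η Σ_{i∈I} Π_i (log Π_i − 1) over Π(μ¹,…,μ^K). -/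
/-!
Scaling the single dual entry `φ̂ᵏ_j` by `t > 0` changes the Sinkhorn function by
`η (μᵏ_j log t - (t - 1) P_k(Π̂)_j)`; since this is `≤ 0` for every `t > 0`, its derivative at
`t = 1` vanishes, i.e. `P_k(Π̂)_j = μᵏ_j`.

For optimality, the gradient of the regularized objective at `Π̂` is
`C + η log Π̂ = η ∑ₖ log φ̂ᵏ_{iₖ}`, a sum of functions of one index each. Pairing it with `T - Π̂`
therefore only sees the marginals of `T` and `Π̂`, which agree, and the gradient inequality of the
convex objective gives that `Π̂` is a minimizer.
-/

open Finset Real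

lemma mul_log_sub_le_mul_log_sub {p q : ℝ} (hp : 0 ≤ p) (hq : 0 < q) :
    p * log q - q ≤ p * log p - p := by
  rcases hp.eq_or_lt with rfl | hp
  · simp [hq.le]
  · have h := mul_le_mul_of_nonneg_left (log_le_sub_one_of_pos (div_pos hq hp)) hp.le
    rw [log_div hq.ne' hp.ne', mul_sub_one, mul_div_cancel₀ _ hp.ne'] at h
    linarith

lemma eq_of_forall_mul_log_le_mul_sub_one {a b : ℝ}
    (h : ∀ t, 0 < t → a * log t ≤ b * (t - 1)) : a = b := by
  have hmax : IsMaxOn (fun x => a * x - b * (exp x - 1)) Set.univ 0 := fun x _ => by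
    simpa using h (exp x) (exp_pos x)
  have hderiv : HasDerivAt (fun x => a * x - b * (exp x - 1)) (a - b) 0 := by
    have hlin : HasDerivAt (fun x => a * x) a 0 := by simpa using (hasDerivAt_id 0).const_mul a
    have hexp : HasDerivAt (fun x => b * (exp x - 1)) b 0 := by
      simpa using ((hasDerivAt_exp 0).sub_const 1).const_mul b
    exact hlin.sub hexp
  linarith [(hmax.isLocalMax Filter.univ_mem).hasDerivAt_eq_zero hderiv]

section Marginal

variable {ι : Type*} [Fintype ι] [DecidableEq ι] {α : ι → Type*} [∀ k, Fintype (α k)]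
  [∀ k, DecidableEq (α k)]

def marginal (T : (∀ k, α k) → ℝ) (k : ι) (j : α k) : ℝ :=
  ∑ i, if i k = j then T i else 0

lemma sum_mul_apply_eq_sum_marginal_mul (T : (∀ k, α k) → ℝ) (k : ι) (g : α k → ℝ) :
    ∑ i, T i * g (i k) = ∑ j, marginal T k j * g j := by
  simp only [marginal, sum_mul, ite_mul, zero_mul]
  rw [sum_comm]
  simp

lemma sum_mul_sum_apply_eq (T : (∀ k, α k) → ℝ) (g : ∀ k, α k → ℝ) :
    ∑ i, T i * ∑ k, g k (i k) = ∑ k, ∑ j, marginal T k j * g k j := by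
  simp_rw [mul_sum]
  rw [sum_comm]
  simp_rw [sum_mul_apply_eq_sum_marginal_mul]

lemma sum_mul_sum_apply_eq_of_marginal_eq {T T' : (∀ k, α k) → ℝ}
    (h : ∀ k j, marginal T k j = marginal T' k j) (g : ∀ k, α k → ℝ) :
    ∑ i, T i * ∑ k, g k (i k) = ∑ i, T' i * ∑ k, g k (i k) := by
  simp only [sum_mul_sum_apply_eq, h]

end Marginal

section Sinkhorn

variable {ι : Type*} {α : ι → Type*}

noncomputable def sinkhorn [Fintype ι] [DecidableEq ι] [∀ k, Fintype (α k)]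
    (μ : ∀ k, α k → ℝ) (𝒦 : (∀ k, α k) → ℝ) (η : ℝ) (ψ : ∀ k, α k → ℝ) : ℝ :=
  η * ∑ k, ∑ j, μ k j * log (ψ k j) - η * ∑ i, 𝒦 i * ∏ k, ψ k (i k)

def dualPlan [Fintype ι] (𝒦 : (∀ k, α k) → ℝ) (φ : ∀ k, α k → ℝ) (i : ∀ k, α k) : ℝ :=
  𝒦 i * ∏ k, φ k (i k)

lemma dualPlan_pos [Fintype ι] {𝒦 : (∀ k, α k) → ℝ} {φ : ∀ k, α k → ℝ} (h𝒦 : ∀ i, 0 < 𝒦 i)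
    (hφ : ∀ k j, 0 < φ k j) (i : ∀ k, α k) : 0 < dualPlan 𝒦 φ i :=
  mul_pos (h𝒦 i) (prod_pos fun k _ => hφ k (i k))

lemma add_mul_log_dualPlan_exp [Fintype ι] {C : (∀ k, α k) → ℝ} {η : ℝ} (hη : η ≠ 0)
    {φ : ∀ k, α k → ℝ} (hφ : ∀ k j, 0 < φ k j) (i : ∀ k, α k) :
    C i + η * log (dualPlan (fun i => exp (-C i / η)) φ i) = η * ∑ k, log (φ k (i k)) := by
  rw [dualPlan, log_mul (exp_ne_zero _) (prod_pos fun k _ => hφ k (i k)).ne', log_exp,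
    log_prod fun k _ => (hφ k (i k)).ne']
  field_simp
  ring

def scaleEntry [DecidableEq ι] [∀ k, DecidableEq (α k)] (φ : ∀ k, α k → ℝ) (k₀ : ι) (j₀ : α k₀)
    (t : ℝ) : ∀ k, α k → ℝ :=
  φ * Pi.mulSingle k₀ (Pi.mulSingle j₀ t)

lemma mulSingle_mulSingle_pos [DecidableEq ι] [∀ k, DecidableEq (α k)] {k₀ : ι} {j₀ : α k₀}
    {t : ℝ} (ht : 0 < t) (k : ι) (j : α k) :
    0 < (Pi.mulSingle k₀ (Pi.mulSingle j₀ t) : ∀ k, α k → ℝ) k j := by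
  by_cases hk : k = k₀
  · subst hk
    by_cases hj : j = j₀ <;> simp [hj, ht]
  · simp [Pi.mulSingle_eq_of_ne hk]

lemma scaleEntry_pos [DecidableEq ι] [∀ k, DecidableEq (α k)] {φ : ∀ k, α k → ℝ}
    (hφ : ∀ k j, 0 < φ k j) (k₀ : ι) (j₀ : α k₀) {t : ℝ} (ht : 0 < t) (k : ι) (j : α k) :
    0 < scaleEntry φ k₀ j₀ t k j :=
  mul_pos (hφ k j) (mulSingle_mulSingle_pos ht k j)

lemma prod_scaleEntry_apply [Fintype ι] [DecidableEq ι] [∀ k, DecidableEq (α k)]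
    (φ : ∀ k, α k → ℝ) (k₀ : ι) (j₀ : α k₀) (t : ℝ) (i : ∀ k, α k) :
    ∏ k, scaleEntry φ k₀ j₀ t k (i k) = (if i k₀ = j₀ then t else 1) * ∏ k, φ k (i k) := by
  have hsingle (k : ι) : (Pi.mulSingle k₀ (Pi.mulSingle j₀ t) : ∀ k, α k → ℝ) k (i k)
      = (Pi.mulSingle k₀ ((Pi.mulSingle j₀ t : α k₀ → ℝ) (i k₀)) : ι → ℝ) k :=
    Pi.apply_mulSingle (fun k (f : α k → ℝ) => f (i k)) (fun _ => rfl) k₀ _ k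
  simp only [scaleEntry, Pi.mul_apply, prod_mul_distrib, hsingle]
  rw [Fintype.prod_pi_mulSingle', Pi.mulSingle_apply, mul_comm]

variable [Fintype ι] [DecidableEq ι] [∀ k, Fintype (α k)] [∀ k, DecidableEq (α k)]

lemma sum_mul_log_scaleEntry (μ : ∀ k, α k → ℝ) {φ : ∀ k, α k → ℝ} (hφ : ∀ k j, 0 < φ k j)
    (k₀ : ι) (j₀ : α k₀) {t : ℝ} (ht : 0 < t) :
    ∑ k, ∑ j, μ k j * log (scaleEntry φ k₀ j₀ t k j)
      = ∑ k, ∑ j, μ k j * log (φ k j) + μ k₀ j₀ * log t := by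
  have hlog (k : ι) (j : α k) : log (scaleEntry φ k₀ j₀ t k j)
      = log (φ k j) + log ((Pi.mulSingle k₀ (Pi.mulSingle j₀ t) : ∀ k, α k → ℝ) k j) :=
    log_mul (hφ k j).ne' (mulSingle_mulSingle_pos ht k j).ne'
  simp_rw [hlog, mul_add, sum_add_distrib, add_right_inj]
  rw [Fintype.sum_eq_single k₀, Fintype.sum_eq_single j₀]
  · simp
  · intro j hj
    simp [hj]
  · intro k hk
    simp [Pi.mulSingle_eq_of_ne hk]

lemma sinkhorn_scaleEntry (μ : ∀ k, α k → ℝ) (𝒦 : (∀ k, α k) → ℝ) (η : ℝ)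
    {φ : ∀ k, α k → ℝ} (hφ : ∀ k j, 0 < φ k j) (k₀ : ι) (j₀ : α k₀) {t : ℝ} (ht : 0 < t) :
    sinkhorn μ 𝒦 η (scaleEntry φ k₀ j₀ t)
      = sinkhorn μ 𝒦 η φ + η * (μ k₀ j₀ * log t - (t - 1) * marginal (dualPlan 𝒦 φ) k₀ j₀) := by
  have hsum : ∑ i, 𝒦 i * ∏ k, scaleEntry φ k₀ j₀ t k (i k)
      = ∑ i, dualPlan 𝒦 φ i + (t - 1) * marginal (dualPlan 𝒦 φ) k₀ j₀ := by
    simp only [prod_scaleEntry_apply, marginal, mul_sum, ← sum_add_distrib, dualPlan]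
    refine sum_congr rfl fun i _ => ?_
    split_ifs <;> ring
  simp only [sinkhorn, sum_mul_log_scaleEntry μ hφ k₀ j₀ ht, hsum, dualPlan]
  ring

lemma marginal_dualPlan_eq_of_forall_sinkhorn_le {μ : ∀ k, α k → ℝ} {𝒦 : (∀ k, α k) → ℝ}
    {η : ℝ} (hη : 0 < η) {φ : ∀ k, α k → ℝ} (hφ : ∀ k j, 0 < φ k j)
    (hmax : ∀ ψ : ∀ k, α k → ℝ, (∀ k j, 0 < ψ k j) → sinkhorn μ 𝒦 η ψ ≤ sinkhorn μ 𝒦 η φ)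
    (k : ι) (j : α k) : marginal (dualPlan 𝒦 φ) k j = μ k j := by
  refine (eq_of_forall_mul_log_le_mul_sub_one fun t ht => ?_).symm
  have h := hmax _ (scaleEntry_pos hφ k j ht)
  rw [sinkhorn_scaleEntry μ 𝒦 η hφ k j ht, add_le_iff_nonpos_right] at h
  linarith [nonpos_of_mul_nonpos_right h hη]

end Sinkhorn

section RegularizedCost

noncomputable def regularizedCost {ι : Type*} [Fintype ι] (C : ι → ℝ) (η : ℝ) (T : ι → ℝ) : ℝ :=
  ∑ i, T i * C i + η * ∑ i, T i * (log (T i) - 1)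

lemma sum_sub_mul_le_regularizedCost_sub {ι : Type*} [Fintype ι] {C P T : ι → ℝ} {η : ℝ}
    (hη : 0 ≤ η) (hP : ∀ i, 0 < P i) (hT : ∀ i, 0 ≤ T i) :
    ∑ i, (T i - P i) * (C i + η * log (P i)) ≤ regularizedCost C η T - regularizedCost C η P := by
  simp only [regularizedCost, mul_sum, ← sum_add_distrib, ← sum_sub_distrib]
  refine sum_le_sum fun i _ => ?_
  linarith [mul_le_mul_of_nonneg_left (mul_log_sub_le_mul_log_sub (hT i) (hP i)) hη]

lemma regularizedCost_dualPlan_exp_le {ι : Type*} [Fintype ι] [DecidableEq ι] {α : ι → Type*}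
    [∀ k, Fintype (α k)] [∀ k, DecidableEq (α k)] {C : (∀ k, α k) → ℝ} {η : ℝ}
    (hη : 0 < η) {φ : ∀ k, α k → ℝ} (hφ : ∀ k j, 0 < φ k j) {T : (∀ k, α k) → ℝ}
    (hT : ∀ i, 0 ≤ T i)
    (hmarg : ∀ k j, marginal T k j = marginal (dualPlan (fun i => exp (-C i / η)) φ) k j) :
    regularizedCost C η (dualPlan (fun i => exp (-C i / η)) φ) ≤ regularizedCost C η T := by
  have h := sum_sub_mul_le_regularizedCost_sub (C := C) hη.le
    (dualPlan_pos (fun i => exp_pos (-C i / η)) hφ) hT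
  simp only [add_mul_log_dualPlan_exp hη.ne' hφ, sub_mul, sum_sub_distrib, mul_left_comm _ η,
    ← mul_sum] at h
  rw [sum_mul_sum_apply_eq_of_marginal_eq hmarg fun k j => log (φ k j), sub_self, mul_zero] at h
  linarith

end RegularizedCost

theorem optimal_plan_from_optimal_duals_general
    (K : ℕ) (n : Fin K → ℕ)
    (μ : ∀ k, Fin (n k) → ℝ)
    (C : (∀ k, Fin (n k)) → ℝ)
    (η : ℝ) (hη : 0 < η)
    (φ : ∀ k, Fin (n k) → ℝ) (hφ : ∀ k j, 0 < φ k j)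
    (hmax : ∀ ψ : ∀ k, Fin (n k) → ℝ, (∀ k j, 0 < ψ k j) →
      η * (∑ k, ∑ j, μ k j * Real.log (ψ k j))
        - η * (∑ i : ∀ k, Fin (n k), Real.exp (-C i / η) * ∏ k, ψ k (i k))
      ≤ η * (∑ k, ∑ j, μ k j * Real.log (φ k j))
        - η * (∑ i : ∀ k, Fin (n k), Real.exp (-C i / η) * ∏ k, φ k (i k))) :
    -- the plan Π̂ᵢ = 𝒦ᵢ ∏ₖ φ̂ᵏ_{iₖ} is admissible:
    ((∀ i : ∀ k, Fin (n k), 0 ≤ Real.exp (-C i / η) * ∏ k, φ k (i k)) ∧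
      ∀ (k : Fin K) (j : Fin (n k)),
        (∑ i : ∀ k, Fin (n k),
          if i k = j then Real.exp (-C i / η) * ∏ k, φ k (i k) else 0) = μ k j) ∧
    -- and it minimizes the regularized objective over all admissible plans:
    (∀ T : (∀ k, Fin (n k)) → ℝ,
      (∀ i, 0 ≤ T i) →
      (∀ (k : Fin K) (j : Fin (n k)),
        (∑ i : ∀ k, Fin (n k), if i k = j then T i else 0) = μ k j) →
      (∑ i : ∀ k, Fin (n k), (Real.exp (-C i / η) * ∏ k, φ k (i k)) * C i)
        + η * (∑ i : ∀ k, Fin (n k), (Real.exp (-C i / η) * ∏ k, φ k (i k)) *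
            (Real.log (Real.exp (-C i / η) * ∏ k, φ k (i k)) - 1))
      ≤ (∑ i : ∀ k, Fin (n k), T i * C i)
        + η * (∑ i : ∀ k, Fin (n k), T i * (Real.log (T i) - 1))) := by
  have hmarg : ∀ k j, marginal (dualPlan (fun i => exp (-C i / η)) φ) k j = μ k j :=
    marginal_dualPlan_eq_of_forall_sinkhorn_le hη hφ hmax
  refine ⟨⟨fun i => (dualPlan_pos (fun i => exp_pos _) hφ i).le, hmarg⟩, fun T hT hTμ => ?_⟩
  exact regularizedCost_dualPlan_exp_le hη hφ hT fun k j => (hTμ k j).trans (hmarg k j).symm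

theorem optimal_plan_from_optimal_duals
    (K : ℕ) (n : Fin K → ℕ)
    (μ : ∀ k, Fin (n k) → ℝ)
    (hμ0 : ∀ k j, 0 ≤ μ k j) (hμ1 : ∀ k, ∑ j, μ k j = 1)
    (C : (∀ k, Fin (n k)) → ℝ) (hC : ∀ i, 0 ≤ C i)
    (η : ℝ) (hη : 0 < η)
    (φ : ∀ k, Fin (n k) → ℝ) (hφ : ∀ k j, 0 < φ k j)
    (hmax : ∀ ψ : ∀ k, Fin (n k) → ℝ, (∀ k j, 0 < ψ k j) →
      η * (∑ k, ∑ j, μ k j * Real.log (ψ k j))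
        - η * (∑ i : ∀ k, Fin (n k), Real.exp (-C i / η) * ∏ k, ψ k (i k))
      ≤ η * (∑ k, ∑ j, μ k j * Real.log (φ k j))
        - η * (∑ i : ∀ k, Fin (n k), Real.exp (-C i / η) * ∏ k, φ k (i k))) :
    -- the plan Π̂ᵢ = 𝒦ᵢ ∏ₖ φ̂ᵏ_{iₖ} is admissible:
    ((∀ i : ∀ k, Fin (n k), 0 ≤ Real.exp (-C i / η) * ∏ k, φ k (i k)) ∧
      ∀ (k : Fin K) (j : Fin (n k)),
        (∑ i : ∀ k, Fin (n k),
          if i k = j then Real.exp (-C i / η) * ∏ k, φ k (i k) else 0) = μ k j) ∧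
    -- and it minimizes the regularized objective over all admissible plans:
    (∀ T : (∀ k, Fin (n k)) → ℝ,
      (∀ i, 0 ≤ T i) →
      (∀ (k : Fin K) (j : Fin (n k)),
        (∑ i : ∀ k, Fin (n k), if i k = j then T i else 0) = μ k j) →
      (∑ i : ∀ k, Fin (n k), (Real.exp (-C i / η) * ∏ k, φ k (i k)) * C i)
        + η * (∑ i : ∀ k, Fin (n k), (Real.exp (-C i / η) * ∏ k, φ k (i k)) *
            (Real.log (Real.exp (-C i / η) * ∏ k, φ k (i k)) - 1))
      ≤ (∑ i : ∀ k, Fin (n k), T i * C i)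
        + η * (∑ i : ∀ k, Fin (n k), T i * (Real.log (T i) - 1))) :=
  optimal_plan_from_optimal_duals_general K n μ C η hη φ hφ hmax
end

section
/- Marginal formula for tree-structured costs (Theorem 4.1): let (V, E) be a tree with V = [K], neighbour sets N_k, and leaves L = {k ∈ V : |N_k| = 1}, and let the cost decouple along its edges. For entrywise positive vectors φ^k ∈ ℝ^{n_k}, define for each ordered pair (k,ℓ) with {k,ℓ} ∈ E the vector α^{(k,ℓ)} ∈ ℝ^{n_k} recursively by α^{(k,ℓ)} = 𝒦^{(k,ℓ)} φ^ℓ if ℓ ∈ L, and α^{(k,ℓ)} = 𝒦^{(k,ℓ)} (φ^ℓ ⊙ ⨀_{t ∈ N_ℓ∖{k}} α^{(ℓ,t)}) otherwise (this recursion is well-founded since the tree has no circles). Then for every node k ∈ V, the k-th marginal satisfies P_k(𝒦 ⊙ Φ) = φ^k ⊙ ⨀_{ℓ ∈ N_k} α^{(k,ℓ)}. -/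
/-!
Root the tree at `k` and call `S ∋ k` a rooted subtree if every vertex of `S` other than `k` has
a neighbour in `S` closer to `k`. Weight a configuration by the edge and vertex factors inside `S`
and by the messages `α t u` on the edges leaving `S`, with the coordinates outside `S` frozen at a
reference configuration. A vertex `m ∈ S` at maximal distance from `k` is a leaf of `S`; summing out
its coordinate turns its factors into the message `α p m` to its neighbour `p`, which is exactly the
defining recursion. Peeling leaves from the whole tree down to `{k}` gives the formula.

A reference configuration exists unless some fibre `β t₀` is empty. Then the left side is an empty
sum, and every message sent towards `t₀` vanishes (induction on the distance to `t₀`), so the right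
side is zero as well.
-/

open Finset

namespace SimpleGraph

variable {V : Type*} {G : SimpleGraph V}

theorem Connected.exists_adj_dist_lt (hG : G.Connected) {r t : V} (ht : t ≠ r) :
    ∃ u, G.Adj t u ∧ G.dist r u < G.dist r t := by
  obtain ⟨q, hq⟩ := hG.exists_walk_length_eq_dist t r
  have hnil : ¬q.Nil := Walk.not_nil_of_ne ht
  refine ⟨q.snd, q.adj_snd hnil, ?_⟩
  have := dist_le q.tail
  have := q.length_tail_add_one hnil
  rw [dist_comm, dist_comm (u := r)]
  omega

theorem IsTree.eq_of_adj_of_dist_lt (hG : G.IsTree) {r m u₁ u₂ : V}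
    (h₁ : G.Adj m u₁) (h₂ : G.Adj m u₂)
    (hd₁ : G.dist r u₁ < G.dist r m) (hd₂ : G.dist r u₂ < G.dist r m) : u₁ = u₂ := by
  classical
  obtain ⟨q, hq, -⟩ := hG.connected.exists_path_of_dist r m
  -- A neighbour of `m` closer to `r` lies on the geodesic from `r` to `m`, just before `m`.
  have key : ∀ u, G.Adj m u → G.dist r u < G.dist r m → u = q.penultimate := by
    intro u hu hdu
    obtain ⟨p, hp, hpl⟩ := hG.connected.exists_path_of_dist r u
    have hm : m ∉ p.support := fun hm => by
      have := dist_le (p.takeUntil m hm)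
      have := p.length_takeUntil_le_length hm
      omega
    exact hG.isAcyclic.eq_penultimate_of_adj_end hq hu
      (hG.isAcyclic.mem_support_of_ne_mem_support_of_adj_of_isPath hq hp hu hm)
  exact (key u₁ h₁ hd₁).trans (key u₂ h₂ hd₂).symm

def IsRootedSubtree (G : SimpleGraph V) (k : V) (S : Finset V) : Prop :=
  ∀ t ∈ S, t ≠ k → ∃ u ∈ S, G.Adj t u ∧ G.dist k u < G.dist k t

theorem IsTree.exists_leaf_of_isRootedSubtree [DecidableEq V] (hG : G.IsTree) {k : V}
    {S : Finset V} (hS : G.IsRootedSubtree k S) (hkS : k ∈ S) (hne : S ≠ {k}) :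
    ∃ m ∈ S, m ≠ k ∧ ∃ p ∈ S.erase m, (∀ u ∈ S.erase m, G.Adj m u ↔ u = p) ∧
      G.IsRootedSubtree k (S.erase m) := by
  obtain ⟨m, hmS, hmax⟩ := S.exists_max_image (G.dist k) ⟨k, hkS⟩
  obtain ⟨t, htS, htk⟩ : ∃ t ∈ S, t ≠ k := by
    by_contra! h
    exact hne (eq_singleton_iff_unique_mem.mpr ⟨hkS, h⟩)
  have hmk : m ≠ k := by
    rintro rfl
    have := hG.connected.pos_dist_of_ne htk.symm
    have := hmax t htS
    rw [dist_self] at this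
    omega
  obtain ⟨p, hpS, hmp, hdp⟩ := hS m hmS hmk
  refine ⟨m, hmS, hmk, p, mem_erase.mpr ⟨hmp.ne', hpS⟩, fun u hu => ⟨fun hmu => ?_, ?_⟩, ?_⟩
  · have hdu := (hG.dist_ne_of_adj k hmu).symm
    exact hG.eq_of_adj_of_dist_lt hmu hmp ((hmax u (mem_of_mem_erase hu)).lt_of_ne hdu) hdp
  · rintro rfl
    exact hmp
  · intro t ht htk
    obtain ⟨u, huS, htu, hdu⟩ := hS t (mem_of_mem_erase ht) htk
    refine ⟨u, mem_erase.mpr ⟨?_, huS⟩, htu, hdu⟩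
    rintro rfl
    have := hmax t (mem_of_mem_erase ht)
    omega

end SimpleGraph

section Pinning

variable {V : Type*} [Fintype V] [DecidableEq V]
  {β : V → Type*} [∀ v, Fintype (β v)] [∀ v, DecidableEq (β v)]

def pinnedOutside (i₀ : ∀ v, β v) (T : Finset V) : Finset (∀ v, β v) :=
  {i | ∀ t ∉ T, i t = i₀ t}

@[simp]
theorem mem_pinnedOutside {i₀ i : ∀ v, β v} {T : Finset V} :
    i ∈ pinnedOutside i₀ T ↔ ∀ t ∉ T, i t = i₀ t := by
  simp [pinnedOutside]

theorem pinnedOutside_empty (i₀ : ∀ v, β v) : pinnedOutside i₀ ∅ = {i₀} := by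
  ext i
  simp [funext_iff]

theorem pinnedOutside_univ_erase (i₀ : ∀ v, β v) (k : V) :
    pinnedOutside i₀ (univ.erase k) = ({i | i k = i₀ k} : Finset (∀ v, β v)) := by
  ext i
  simp

theorem sum_pinnedOutside_insert {M : Type*} [AddCommMonoid M] (i₀ : ∀ v, β v) {m : V}
    {T : Finset V} (hm : m ∉ T) (F : (∀ v, β v) → M) :
    ∑ i ∈ pinnedOutside i₀ (insert m T), F i =
      ∑ i ∈ pinnedOutside i₀ T, ∑ v, F (Function.update i m v) := by
  rw [← sum_product']
  refine sum_nbij' (fun i => (Function.update i m (i₀ m), i m))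
    (fun q => Function.update q.1 m q.2) ?_ ?_ ?_ ?_ ?_
  · simp only [mem_product, mem_univ, and_true, mem_pinnedOutside, mem_insert, not_or]
    intro i hi t ht
    by_cases htm : t = m
    · subst htm
      simp
    · rw [Function.update_of_ne htm]
      exact hi t ⟨htm, ht⟩
  · simp only [mem_product, mem_univ, and_true, mem_pinnedOutside, mem_insert, not_or]
    intro q hq t ⟨htm, ht⟩
    rw [Function.update_of_ne htm]
    exact hq t ht
  · simp
  · simp only [mem_product, mem_univ, and_true, mem_pinnedOutside]
    intro q hq
    ext1
    · rw [Function.update_idem, ← hq m hm, Function.update_eq_self]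
    · simp
  · simp

end Pinning

namespace SimpleGraph

variable {V : Type*} [Fintype V] [DecidableEq V] {G : SimpleGraph V} [DecidableRel G.Adj]
  {β : V → Type*} {R : Type*} [CommSemiring R]
  {w : Sym2 V → (∀ v, β v) → R} {φ : ∀ v, β v → R} {α : ∀ a : V, V → β a → R}

theorem neighborFinset_sdiff_singleton_eq_empty_of_degree_eq_one {a b : V} (hab : G.Adj a b)
    (hb : G.degree b = 1) : G.neighborFinset b \ {a} = ∅ := by
  rw [sdiff_eq_empty_iff_subset]
  intro u hu
  rw [← card_neighborFinset_eq_degree] at hb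
  exact mem_singleton.mpr (card_le_one.mp hb.le u hu a (by simpa using hab.symm))

def subtreeWeight (G : SimpleGraph V) [DecidableRel G.Adj] (w : Sym2 V → (∀ v, β v) → R)
    (φ : ∀ v, β v → R) (α : ∀ a : V, V → β a → R) (S : Finset V) (i : ∀ v, β v) : R :=
  (∏ e ∈ G.edgeFinset ∩ S.sym2, w e i) * (∏ t ∈ S, φ t (i t)) *
    ∏ t ∈ S, ∏ u ∈ G.neighborFinset t \ S, α t u (i t)

theorem subtreeWeight_singleton (k : V) (i : ∀ v, β v) :
    G.subtreeWeight w φ α {k} i = φ k (i k) * ∏ ℓ ∈ G.neighborFinset k, α k ℓ (i k) := by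
  simp [subtreeWeight, sym2_singleton, sdiff_singleton_eq_erase]

theorem subtreeWeight_univ (i : ∀ v, β v) :
    G.subtreeWeight w φ α univ i = (∏ e ∈ G.edgeFinset, w e i) * ∏ t, φ t (i t) := by
  simp [subtreeWeight, sym2_univ, sdiff_eq_empty_iff_subset.mpr (subset_univ _)]

variable {S : Finset V} {m p : V}

theorem edgeFinset_inter_sym2_of_leaf (hm : m ∈ S) (hp : p ∈ S.erase m)
    (hleaf : ∀ u ∈ S.erase m, G.Adj m u ↔ u = p) :
    G.edgeFinset ∩ S.sym2 = insert s(p, m) (G.edgeFinset ∩ (S.erase m).sym2) := by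
  ext e
  induction e with
  | _ a b =>
    simp only [mem_inter, mem_edgeFinset, mem_edgeSet, mk_mem_sym2_iff, mem_insert, mem_erase,
      Sym2.eq_iff]
    have := hleaf a
    have := hleaf b
    have := (hleaf p hp).mpr rfl
    have := G.irrefl (v := m)
    grind [G.adj_symm]

theorem prod_neighborFinset_sdiff_erase_of_leaf {M : Type*} [CommMonoid M] (hm : m ∈ S)
    (hp : p ∈ S.erase m) (hleaf : ∀ u ∈ S.erase m, G.Adj m u ↔ u = p) (g : V → V → M) :
    ∏ t ∈ S.erase m, ∏ u ∈ G.neighborFinset t \ S.erase m, g t u =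
      g p m * ∏ t ∈ S.erase m, ∏ u ∈ G.neighborFinset t \ S, g t u := by
  have key : ∀ t ∈ S.erase m, ∏ u ∈ G.neighborFinset t \ S.erase m, g t u =
      (if t = p then g t m else 1) * ∏ u ∈ G.neighborFinset t \ S, g t u := by
    intro t ht
    split_ifs with htp
    · subst htp
      rw [← prod_insert (s := G.neighborFinset t \ S) (by simp [hm])]
      congr 1
      ext u
      have := ((hleaf t ht).mpr rfl).symm
      simp only [mem_sdiff, mem_neighborFinset, mem_erase, mem_insert]
      grind
    · rw [one_mul]
      congr 1
      ext u
      simp only [mem_sdiff, mem_neighborFinset, mem_erase]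
      have := hleaf t
      grind [G.adj_symm]
  rw [prod_congr rfl key, prod_mul_distrib, prod_ite_eq' _ _ _, if_pos hp]

variable [∀ v, Fintype (β v)] {ψ : ∀ a b : V, β a → β b → R}

def IsMessageFamily (G : SimpleGraph V) [DecidableRel G.Adj] (ψ : ∀ a b : V, β a → β b → R)
    (φ : ∀ v, β v → R) (α : ∀ a : V, V → β a → R) : Prop :=
  ∀ a b, G.Adj a b → ∀ y,
    α a b y = ∑ z, ψ a b y z * (φ b z * ∏ t ∈ G.neighborFinset b \ {a}, α b t z)

theorem sum_subtreeWeight_update_of_leaf (hw : ∀ a b i, w s(a, b) i = ψ a b (i a) (i b))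
    (hα : G.IsMessageFamily ψ φ α) (hm : m ∈ S) (hp : p ∈ S.erase m)
    (hleaf : ∀ u ∈ S.erase m, G.Adj m u ↔ u = p) (i : ∀ v, β v) :
    ∑ v, G.subtreeWeight w φ α S (Function.update i m v) =
      G.subtreeWeight w φ α (S.erase m) i := by
  have hpm : G.Adj p m := ((hleaf p hp).mpr rfl).symm
  set A := ∏ e ∈ G.edgeFinset ∩ (S.erase m).sym2, w e i
  set B := ∏ t ∈ S.erase m, φ t (i t)
  set C := ∏ t ∈ S.erase m, ∏ u ∈ G.neighborFinset t \ S, α t u (i t)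
  have hA : ∀ v, ∏ e ∈ G.edgeFinset ∩ (S.erase m).sym2, w e (Function.update i m v) = A := by
    intro v
    refine prod_congr rfl fun e he => ?_
    induction e with
    | _ a b =>
      obtain ⟨ha, hb⟩ := mk_mem_sym2_iff.mp (mem_inter.mp he).2
      rw [hw, hw, Function.update_of_ne (ne_of_mem_erase ha),
        Function.update_of_ne (ne_of_mem_erase hb)]
  have hB : ∀ v, ∏ t ∈ S, φ t (Function.update i m v t) = φ m v * B := by
    intro v
    rw [← mul_prod_erase S _ hm, Function.update_self]
    congr 1
    exact prod_congr rfl fun t ht => by rw [Function.update_of_ne (ne_of_mem_erase ht)]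
  have hN : G.neighborFinset m \ S = G.neighborFinset m \ {p} := by
    ext u
    have := hleaf u
    have := G.ne_of_adj (a := m) (b := u)
    simp only [mem_sdiff, mem_neighborFinset, mem_singleton, mem_erase] at *
    grind
  have hC : ∀ v, ∏ t ∈ S, ∏ u ∈ G.neighborFinset t \ S, α t u (Function.update i m v t) =
      (∏ u ∈ G.neighborFinset m \ {p}, α m u v) * C := by
    intro v
    rw [← mul_prod_erase S _ hm, Function.update_self, hN]
    congr 1
    exact prod_congr rfl fun t ht => by rw [Function.update_of_ne (ne_of_mem_erase ht)]
  have hterm : ∀ v, G.subtreeWeight w φ α S (Function.update i m v) =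
      ψ p m (i p) v * (φ m v * ∏ u ∈ G.neighborFinset m \ {p}, α m u v) * (A * B * C) := by
    intro v
    have hnew : s(p, m) ∉ G.edgeFinset ∩ (S.erase m).sym2 := by simp
    rw [subtreeWeight, edgeFinset_inter_sym2_of_leaf hm hp hleaf, prod_insert hnew, hA, hB, hC,
      hw, Function.update_of_ne hpm.ne, Function.update_self]
    ring
  have hrest : G.subtreeWeight w φ α (S.erase m) i = α p m (i p) * (A * B * C) := by
    rw [subtreeWeight, prod_neighborFinset_sdiff_erase_of_leaf hm hp hleaf]
    ring
  rw [sum_congr rfl fun v _ => hterm v, ← sum_mul, ← hα p m hpm, hrest]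

theorem IsMessageFamily.eq_zero_of_isEmpty (hα : G.IsMessageFamily ψ φ α) (hG : G.Connected)
    {t₀ : V} (h₀ : IsEmpty (β t₀)) {a b : V} (hab : G.Adj a b)
    (hd : G.dist t₀ b < G.dist t₀ a) : α a b = 0 := by
  induction hD : G.dist t₀ b using Nat.strong_induction_on generalizing a b with
  | _ D ih =>
  funext y
  rw [hα a b hab y, Pi.zero_apply]
  by_cases hb : b = t₀
  · subst hb
    exact Fintype.sum_empty _
  obtain ⟨u, hbu, hdu⟩ := hG.exists_adj_dist_lt hb
  have hua : u ≠ a := by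
    rintro rfl
    omega
  refine sum_eq_zero fun z _ => ?_
  have hu : u ∈ G.neighborFinset b \ {a} := by simp [hbu, hua]
  rw [prod_eq_zero hu (congrFun (ih _ (hD ▸ hdu) hbu (by omega) rfl) z), mul_zero, mul_zero]

variable [∀ v, DecidableEq (β v)]

theorem IsTree.sum_pinnedOutside_subtreeWeight (hG : G.IsTree)
    (hw : ∀ a b i, w s(a, b) i = ψ a b (i a) (i b)) (hα : G.IsMessageFamily ψ φ α)
    (i₀ : ∀ v, β v) {k : V} (hkS : k ∈ S) (hS : G.IsRootedSubtree k S) :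
    ∑ i ∈ pinnedOutside i₀ (S.erase k), G.subtreeWeight w φ α S i =
      φ k (i₀ k) * ∏ ℓ ∈ G.neighborFinset k, α k ℓ (i₀ k) := by
  induction S using Finset.strongInduction with
  | H S ih =>
  by_cases hk : S = {k}
  · subst hk
    rw [erase_singleton, pinnedOutside_empty, sum_singleton, subtreeWeight_singleton]
  obtain ⟨m, hm, hmk, p, hp, hleaf, hS'⟩ := hG.exists_leaf_of_isRootedSubtree hS hkS hk
  have hsplit : S.erase k = insert m ((S.erase m).erase k) := by
    rw [erase_right_comm, insert_erase (mem_erase.mpr ⟨hmk, hm⟩)]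
  rw [hsplit, sum_pinnedOutside_insert _ (by simp)]
  simp_rw [sum_subtreeWeight_update_of_leaf hw hα hm hp hleaf]
  exact ih _ (erase_ssubset hm) (mem_erase.mpr ⟨hmk.symm, hkS⟩) hS'

theorem IsTree.sum_prod_eq_mul_prod_message (hG : G.IsTree)
    (hw : ∀ a b i, w s(a, b) i = ψ a b (i a) (i b)) (hα : G.IsMessageFamily ψ φ α)
    (k : V) (x : β k) :
    ∑ i with i k = x, (∏ e ∈ G.edgeFinset, w e i) * ∏ t, φ t (i t) =
      φ k x * ∏ ℓ ∈ G.neighborFinset k, α k ℓ x := by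
  by_cases hβ : ∀ v, Nonempty (β v)
  · have hroot : G.IsRootedSubtree k univ := fun t _ htk =>
      let ⟨u, htu, hdu⟩ := hG.connected.exists_adj_dist_lt htk
      ⟨u, mem_univ u, htu, hdu⟩
    have := hG.sum_pinnedOutside_subtreeWeight hw hα
      (Function.update (fun v => (hβ v).some) k x) (mem_univ k) hroot
    simpa only [pinnedOutside_univ_erase, Function.update_self, subtreeWeight_univ] using this
  · obtain ⟨t₀, h₀⟩ : ∃ t₀, IsEmpty (β t₀) := by simpa using hβ
    have hk : k ≠ t₀ := by
      rintro rfl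
      exact h₀.false x
    obtain ⟨u, hku, hdu⟩ := hG.connected.exists_adj_dist_lt hk
    have hu : u ∈ G.neighborFinset k := by simpa using hku
    rw [prod_eq_zero hu (congrFun (hα.eq_zero_of_isEmpty hG.connected h₀ hku hdu) x), mul_zero]
    exact sum_eq_zero fun i _ => (h₀.false (i t₀)).elim

end SimpleGraph

open SimpleGraph

theorem tree_marginal_formula
    (K d : ℕ) (n : Fin K → ℕ)
    (x : ∀ k, Fin (n k) → EuclideanSpace ℝ (Fin d))
    (G : SimpleGraph (Fin K)) [DecidableRel G.Adj] (hG : G.IsTree)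
    (η : ℝ)
    (φ : ∀ k, Fin (n k) → ℝ)
    (α : ∀ (k ℓ : Fin K), Fin (n k) → ℝ)
    (hleaf : ∀ k ℓ, G.Adj k ℓ → G.degree ℓ = 1 → ∀ j : Fin (n k),
      α k ℓ j = ∑ j' : Fin (n ℓ), Real.exp (-‖x k j - x ℓ j'‖ ^ 2 / η) * φ ℓ j')
    (hrec : ∀ k ℓ, G.Adj k ℓ → G.degree ℓ ≠ 1 → ∀ j : Fin (n k),
      α k ℓ j = ∑ j' : Fin (n ℓ), Real.exp (-‖x k j - x ℓ j'‖ ^ 2 / η) *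
        (φ ℓ j' * ∏ t ∈ G.neighborFinset ℓ \ {k}, α ℓ t j')) :
    ∀ (k : Fin K) (j : Fin (n k)),
      (∑ i : ∀ k, Fin (n k), if i k = j then
          Real.exp (-(∑ e ∈ G.edgeFinset,
              Sym2.lift ⟨fun k₁ k₂ => ‖x k₁ (i k₁) - x k₂ (i k₂)‖ ^ 2,
                fun k₁ k₂ => by dsimp only; rw [norm_sub_rev]⟩ e) / η)
            * ∏ t, φ t (i t)
        else 0)
      = φ k j * ∏ ℓ ∈ G.neighborFinset k, α k ℓ j := by
  intro k j
  have hα : G.IsMessageFamily (fun a b y z => Real.exp (-‖x a y - x b z‖ ^ 2 / η)) φ α := by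
    intro a b hab y
    by_cases hb : G.degree b = 1
    · rw [hleaf a b hab hb y, neighborFinset_sdiff_singleton_eq_empty_of_degree_eq_one hab hb]
      simp only [prod_empty, mul_one]
    · exact hrec a b hab hb y
  simp_rw [← sum_neg_distrib, sum_div, Real.exp_sum]
  rw [← sum_filter]
  exact hG.sum_prod_eq_mul_prod_message (fun _ _ _ => rfl) hα k j
end

section
/- Recursive computation of the upward messages on a rooted tree (identity (4.9) of the paper): let (V, E) be a tree with V = [K], rooted at 1, with parent map p satisfying p(k) < k for k ≠ 1, children sets C_k = {ℓ ∈ N_k : ℓ > k}, and let the cost decouple along the edges. For entrywise positive φ^k, let α^{(k,ℓ)} be as in the tree marginal recursion (α^{(k,ℓ)} = 𝒦^{(k,ℓ)} φ^ℓ for leaf ℓ, else 𝒦^{(k,ℓ)}(φ^ℓ ⊙ ⨀_{t∈N_ℓ∖{k}} α^{(ℓ,t)})) and set β_ℓ := α^{(p(ℓ),ℓ)} for ℓ ≠ 1. Define γ_1 := 1_{n_1} and γ_ℓ := α^{(ℓ,p(ℓ))} for ℓ = 2,…,K. Then for all ℓ = 2,…,K: γ_ℓ = (𝒦^{(p(ℓ),ℓ)})^⊤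 ( φ^{p(ℓ)} ⊙ γ_{p(ℓ)} ⊙ ⨀_{t ∈ C_{p(ℓ)}∖{ℓ}} β_t ). -/
/-!
Recursive computation of the upward messages on a rooted tree (identity (4.9)):
let `G` be a tree on `[K]` rooted at `0`, with parent map `p` satisfying `p k < k`
for `k ≠ 0`, and children sets `C_k = {ℓ ∈ N_k : ℓ > k}`.  With `α^{(k,ℓ)}` given by
the tree marginal recursion, `β_ℓ := α^{(p ℓ, ℓ)}`, `γ_0 := 𝟙` and `γ_ℓ := α^{(ℓ, p ℓ)}`
for `ℓ ≠ 0`, we have for every `ℓ ≠ 0` the identity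
`γ_ℓ = (𝒦^{(p ℓ, ℓ)})ᵀ (φ^{p ℓ} ⊙ γ_{p ℓ} ⊙ ⨀_{t ∈ C_{p ℓ} ∖ {ℓ}} β_t)`.
(For `t ∈ C_{p ℓ}` one has `p t = p ℓ`, so `β_t = α^{(p ℓ, t)}`.)
-/

theorem rooted_tree_upward_message_recursion
    (K d : ℕ) (hK : 0 < K) (n : Fin K → ℕ)
    (x : ∀ k, Fin (n k) → EuclideanSpace ℝ (Fin d))
    (G : SimpleGraph (Fin K)) [DecidableRel G.Adj] (hG : G.IsTree)
    (root : Fin K) (hroot : root = ⟨0, hK⟩)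
    (p : Fin K → Fin K)
    (hpadj : ∀ k, k ≠ root → G.Adj (p k) k)
    (hplt : ∀ k, k ≠ root → p k < k)
    (η : ℝ) (hη : 0 < η)
    (φ : ∀ k, Fin (n k) → ℝ) (hφ : ∀ k j, 0 < φ k j)
    (α : ∀ (k ℓ : Fin K), Fin (n k) → ℝ)
    (hleaf : ∀ k ℓ, G.Adj k ℓ → G.degree ℓ = 1 → ∀ j : Fin (n k),
      α k ℓ j = ∑ j' : Fin (n ℓ), Real.exp (-‖x k j - x ℓ j'‖ ^ 2 / η) * φ ℓ j')
    (hrec : ∀ k ℓ, G.Adj k ℓ → G.degree ℓ ≠ 1 → ∀ j : Fin (n k),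
      α k ℓ j = ∑ j' : Fin (n ℓ), Real.exp (-‖x k j - x ℓ j'‖ ^ 2 / η) *
        (φ ℓ j' * ∏ t ∈ G.neighborFinset ℓ \ {k}, α ℓ t j'))
    (γ : ∀ k, Fin (n k) → ℝ)
    (hγroot : ∀ j : Fin (n root), γ root j = 1)
    (hγ : ∀ k, k ≠ root → ∀ j : Fin (n k), γ k j = α k (p k) j) :
    ∀ ℓ, ℓ ≠ root → ∀ j : Fin (n ℓ),
      γ ℓ j = ∑ j' : Fin (n (p ℓ)),
        Real.exp (-‖x (p ℓ) j' - x ℓ j‖ ^ 2 / η) *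
          (φ (p ℓ) j' * γ (p ℓ) j' *
            ∏ t ∈ ((G.neighborFinset (p ℓ)).filter (fun t => p ℓ < t)) \ {ℓ},
              α (p ℓ) t j') := by

  classical
  -- Every edge of the tree goes between a vertex and its parent.
  have key : ∀ a b : Fin K, G.Adj a b → a < b → p b = a := by
    intro a b hab hlt
    set S : Finset (Fin K) := Finset.univ.filter (· ≠ root) with hS
    have hSform : ∀ k, k ∈ S ↔ k ≠ root := by
      intro k; simp [hS]
    have hcardS : S.card = K - 1 := by
      have : S = {root}ᶜ := by
        ext k; simp [hS]
      rw [this, Finset.card_compl]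
      simp
    set f : Fin K → Sym2 (Fin K) := fun k => s(p k, k) with hf
    have hinj : Set.InjOn f (S : Set (Fin K)) := by
      intro k hk m hm h
      simp only [Finset.mem_coe, hSform] at hk hm
      simp only [hf, Sym2.eq_iff] at h
      rcases h with ⟨h1, h2⟩ | ⟨h1, h2⟩
      · exact h2
      · exfalso
        have hk' := hplt k hk
        have hm' := hplt m hm
        rw [h1] at hk'
        rw [← h2] at hm'
        exact absurd (hk'.trans hm') (lt_irrefl _)
    have hsub : S.image f ⊆ G.edgeFinset := by
      intro e he
      rcases Finset.mem_image.mp he with ⟨k, hk, rfl⟩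
      rw [hSform] at hk
      simpa [hf] using (hpadj k hk)
    have hcard : (S.image f).card = G.edgeFinset.card := by
      rw [Finset.card_image_of_injOn hinj, hcardS]
      have h := hG.card_edgeFinset
      simp only [Fintype.card_fin] at h
      omega
    have heq : S.image f = G.edgeFinset :=
      Finset.eq_of_subset_of_card_le hsub (le_of_eq hcard.symm)
    have hmem : s(a, b) ∈ S.image f := by
      rw [heq]
      simpa using hab
    rcases Finset.mem_image.mp hmem with ⟨k, hk, hke⟩
    rw [hSform] at hk
    simp only [hf, Sym2.eq_iff] at hke
    rcases hke with ⟨h1, h2⟩ | ⟨h1, h2⟩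
    · rw [← h2, h1]
    · exfalso
      have := hplt k hk
      rw [h1, h2] at this
      exact absurd (hlt.trans this) (lt_irrefl _)
  intro ℓ hℓ j
  have hadj : G.Adj (p ℓ) ℓ := hpadj ℓ hℓ
  have hadj' : G.Adj ℓ (p ℓ) := hadj.symm
  have hpl : p ℓ < ℓ := hplt ℓ hℓ
  have hγℓ : γ ℓ j = α ℓ (p ℓ) j := hγ ℓ hℓ j
  by_cases hdeg : G.degree (p ℓ) = 1
  · -- the parent is a leaf, hence the root, with single neighbor ℓ
    have hN : G.neighborFinset (p ℓ) = {ℓ} := by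
      have hmem : ℓ ∈ G.neighborFinset (p ℓ) := by simpa using hadj
      have hcard : (G.neighborFinset (p ℓ)).card = 1 := by
        rw [G.card_neighborFinset_eq_degree, hdeg]
      rcases Finset.card_eq_one.mp hcard with ⟨a, ha⟩
      rw [ha] at hmem ⊢
      rw [Finset.mem_singleton.mp hmem]
    have hproot : p ℓ = root := by
      by_contra h
      have : p (p ℓ) ∈ G.neighborFinset (p ℓ) := by
        simpa using (hpadj (p ℓ) h).symm
      rw [hN, Finset.mem_singleton] at this
      have h1 := hplt (p ℓ) h
      rw [this] at h1
      exact absurd (hpl.trans h1) (lt_irrefl _)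
    have hγp : ∀ j', γ (p ℓ) j' = 1 := by
      intro j'
      have := hγroot
      rw [← hproot] at this
      exact this j'
    have hempty : ((G.neighborFinset (p ℓ)).filter (fun t => p ℓ < t)) \ {ℓ} = ∅ := by
      rw [hN]
      ext t
      simp only [Finset.mem_sdiff, Finset.mem_filter, Finset.mem_singleton,
        Finset.notMem_empty, iff_false]
      rintro ⟨⟨rfl, _⟩, h⟩
      exact h rfl
    rw [hγℓ, hleaf ℓ (p ℓ) hadj' hdeg j]
    apply Finset.sum_congr rfl
    intro j' _
    rw [hempty, hγp j', norm_sub_rev]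
    simp [mul_comm]
  · -- interior parent: use the recursion and split off the grandparent factor
    have hprod : ∀ j' : Fin (n (p ℓ)),
        ∏ t ∈ G.neighborFinset (p ℓ) \ {ℓ}, α (p ℓ) t j'
          = γ (p ℓ) j' *
            ∏ t ∈ ((G.neighborFinset (p ℓ)).filter (fun t => p ℓ < t)) \ {ℓ},
              α (p ℓ) t j' := by
      intro j'
      by_cases hproot : p ℓ = root
      · -- all neighbors of the root are larger than it
        have hfil : (G.neighborFinset (p ℓ)).filter (fun t => p ℓ < t)
            = G.neighborFinset (p ℓ) := by
          apply Finset.filter_true_of_mem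
          intro t ht
          rw [SimpleGraph.mem_neighborFinset] at ht
          have hne : t ≠ p ℓ := fun h => G.irrefl (h ▸ ht)
          have : (p ℓ : Fin K).val = 0 := by rw [hproot, hroot]
          have htv : 0 < t.val := by
            rcases Nat.eq_zero_or_pos t.val with h0 | h0
            · exfalso; apply hne; apply Fin.ext; rw [this, h0]
            · exact h0
          rw [Fin.lt_def, this]
          exact htv
        have hγp : γ (p ℓ) j' = 1 := by
          have := hγroot
          rw [← hproot] at this
          exact this j'
        rw [hfil, hγp, one_mul]
      · -- split off the parent of `p ℓ`
        have hgp : p (p ℓ) < p ℓ := hplt (p ℓ) hproot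
        have hgadj : G.Adj (p (p ℓ)) (p ℓ) := hpadj (p ℓ) hproot
        have hgne : p (p ℓ) ≠ ℓ := fun h => absurd (h ▸ hgp |>.trans hpl) (lt_irrefl _)
        have hsplit : G.neighborFinset (p ℓ) \ {ℓ}
            = insert (p (p ℓ))
              (((G.neighborFinset (p ℓ)).filter (fun t => p ℓ < t)) \ {ℓ}) := by
          ext t
          simp only [Finset.mem_sdiff, Finset.mem_insert, Finset.mem_filter,
            Finset.mem_singleton, SimpleGraph.mem_neighborFinset]
          constructor
          · rintro ⟨hat, hne⟩
            rcases lt_trichotomy t (p ℓ) with h | h | h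
            · left
              exact (key t (p ℓ) hat.symm h).symm
            · exact absurd (h ▸ hat) (G.irrefl)
            · right; exact ⟨⟨hat, h⟩, hne⟩
          · rintro (rfl | ⟨⟨hat, _⟩, hne⟩)
            · exact ⟨hgadj.symm, hgne⟩
            · exact ⟨hat, hne⟩
        have hnotmem : p (p ℓ) ∉
            ((G.neighborFinset (p ℓ)).filter (fun t => p ℓ < t)) \ {ℓ} := by
          simp only [Finset.mem_sdiff, Finset.mem_filter, not_and]
          intro h
          exact absurd h.2 (not_lt_of_gt hgp)
        rw [hsplit, Finset.prod_insert hnotmem, hγ (p ℓ) hproot j']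
    rw [hγℓ, hrec ℓ (p ℓ) hadj' hdeg j]
    apply Finset.sum_congr rfl
    intro j' _
    rw [hprod j', norm_sub_rev]
    ring
end

section
/- Marginal formula for circle-structured costs (Theorem 4.2): let (V, E) be the circle graph on V = [K] with edges {k, k+1 mod K}, and let the cost decouple along its edges. For entrywise positive vectors φ^k ∈ ℝ^{n_k}, define matrices α^{(ℓ,t)} ∈ ℝ^{n_ℓ×n_t} recursively (indices mod K) by α^{(ℓ,t)} = 𝒦^{(ℓ,t)} if d(ℓ,t) = 1, and α^{(ℓ,t)} = 𝒦^{(ℓ,ℓ+1)} (φ^{ℓ+1} ⊙ α^{(ℓ+1,t)}) otherwise, where φ^{ℓ+1} ⊙ A scales the rows of A. Then for every node k ∈ [K] and index i ∈ [n_k], the k-th marginal satisfies [P_k(𝒦 ⊙ Φ)]_i = φ^k_i · Σ_{j=1}^{n_{k+1}} 𝒦^{(k,k+1)}_{i,j} φ^{k+1}_j α^{(k+1,k)}_{j,i}. -/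
/-!
Unroll the circle at `k` into the chain `k, k+1, …, k-1` and let `W m` be the transfer matrix
`𝒦^{(k+m,k+m+1)}` with its rows scaled by `φ^{k+m}`. The marginal at `(k, i)` is then the `i`-th
entry of `W 0 ⋯ W (K-2)` applied to the closing column `φ^{k-1} ⊙ 𝒦^{(k-1,k)}_{·,i}`. The
recursion for `α` says exactly that the columns `v m = φ^{k+m} ⊙ α^{(k+m,k)}_{·,i}` satisfy
`v m = W m (v (m+1))`, the last of them being the closing column, so the product telescopes down
to `W 0 (v 1)`, which is the right-hand side.
-/

open Matrix

namespace CircleMarginal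

section Chain

variable {R : Type*} [CommSemiring R] {β : ℕ → Type*} [∀ m, Fintype (β m)]
  [∀ m, DecidableEq (β m)]

def chainProd (W : ∀ m, Matrix (β m) (β (m + 1)) R) : ∀ t, Matrix (β 0) (β t) R
  | 0 => 1
  | t + 1 => chainProd W t * W t

theorem chainProd_one (W : ∀ m, Matrix (β m) (β (m + 1)) R) : chainProd W 1 = W 0 :=
  Matrix.one_mul _

-- The start of the path is written `⟨0, _⟩`: `((0 : Fin (t + 1)) : ℕ)` is not defeq to `0`.
theorem sum_paths_eq_chainProd_mulVec (W : ∀ m, Matrix (β m) (β (m + 1)) R) (t : ℕ)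
    (g : β t → R) (a : β 0) :
    ∑ y : (∀ r : Fin (t + 1), β r),
      (if y ⟨0, t.succ_pos⟩ = a then
        (∏ r : Fin t, W r (y r.castSucc) (y r.succ)) * g (y (Fin.last t)) else 0)
      = (chainProd W t *ᵥ g) a := by
  induction t with
  | zero =>
    rw [← (Fin.snocEquiv fun r : Fin 1 => β r).sum_comp, Fintype.sum_prod_type]
    simp [chainProd, Fin.snocEquiv, Fin.snoc]
  | succ t ih =>
    rw [← (Fin.snocEquiv fun r : Fin (t + 2) => β r).sum_comp, Fintype.sum_prod_type,
      Finset.sum_comm, chainProd, ← mulVec_mulVec, ← ih]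
    refine Finset.sum_congr rfl fun y _ => ?_
    have hstart (c : β (t + 1)) : Fin.snoc (α := fun r : Fin (t + 2) => β r) y c ⟨0, by omega⟩
        = y ⟨0, t.succ_pos⟩ :=
      Fin.snoc_castSucc (α := fun r : Fin (t + 2) => β r) c y ⟨0, t.succ_pos⟩
    simp only [Fin.snocEquiv, Equiv.coe_fn_mk, hstart, Fin.prod_univ_castSucc, Fin.succ_castSucc,
      Fin.snoc_castSucc, Fin.succ_last, Fin.snoc_last, Fin.val_castSucc, Fin.val_last, mulVec,
      dotProduct, Finset.mul_sum]
    split_ifs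
    · exact Finset.sum_congr rfl fun c _ => by ring
    · exact Finset.sum_const_zero

theorem chainProd_mulVec_eq_of_mulVec (W : ∀ m, Matrix (β m) (β (m + 1)) R)
    (v : ∀ m, β m → R) {s N : ℕ} (hsN : s ≤ N)
    (hv : ∀ m, s ≤ m → m < N → v m = W m *ᵥ v (m + 1)) :
    chainProd W s *ᵥ v s = chainProd W N *ᵥ v N := by
  induction N, hsN using Nat.le_induction with
  | base => rfl
  | succ N hsN ih =>
    rw [ih fun m hs hm => hv m hs (by omega), hv N hsN (by omega), mulVec_mulVec]
    rfl

end Chain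

section Cycle

variable {K : ℕ}

-- Recursive rather than `k + m`, so that `cycleVertex k (m + 1) = cycleVertex k m + 1` is
-- definitional and no casts are needed between `γ (k + ↑(m + 1))` and `γ (k + ↑m + 1)`.
def cycleVertex (k : Fin (K + 1)) : ℕ → Fin (K + 1)
  | 0 => k
  | m + 1 => cycleVertex k m + 1

theorem val_cycleVertex (k : Fin (K + 1)) (m : ℕ) :
    (cycleVertex k m : ℕ) = (k + m) % (K + 1) := by
  induction m with
  | zero => simp [cycleVertex, Nat.mod_eq_of_lt k.isLt]
  | succ m ih =>
    rw [cycleVertex, Fin.val_add, ih, Fin.val_one', ← Nat.add_mod, Nat.add_assoc]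

theorem cycleVertex_eq_self_iff (k : Fin (K + 1)) (m : ℕ) :
    cycleVertex k m = k ↔ K + 1 ∣ m := by
  rw [Fin.ext_iff, val_cycleVertex, ← Nat.add_modEq_left_iff, Nat.ModEq,
    Nat.mod_eq_of_lt k.isLt]

theorem cycleVertex_period (k : Fin (K + 1)) : cycleVertex k (K + 1) = k :=
  (cycleVertex_eq_self_iff k (K + 1)).2 dvd_rfl

theorem cycleVertex_coe_eq_add (k r : Fin (K + 1)) : cycleVertex k r = k + r := by
  ext
  rw [val_cycleVertex, Fin.val_add]

def cycleVertexEquiv (k : Fin (K + 1)) : Fin (K + 1) ≃ Fin (K + 1) where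
  toFun r := cycleVertex k r
  invFun t := t - k
  left_inv r := by simp [cycleVertex_coe_eq_add]
  right_inv t := by simp [cycleVertex_coe_eq_add]

variable {R : Type*} [CommSemiring R] {γ : Fin (K + 1) → Type*} [∀ ℓ, Fintype (γ ℓ)]
  [∀ ℓ, DecidableEq (γ ℓ)]

theorem sum_cycle_eq_chainProd_mulVec (F : ∀ ℓ t, γ ℓ → γ t → R) (k : Fin (K + 1)) (i : γ k) :
    ∑ jj : (∀ ℓ, γ ℓ), (if jj k = i then ∏ ℓ, F ℓ (ℓ + 1) (jj ℓ) (jj (ℓ + 1)) else 0)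
      = (chainProd (β := fun m => γ (cycleVertex k m))
          (fun m => of (F (cycleVertex k m) (cycleVertex k (m + 1)))) K *ᵥ
          fun a => F (cycleVertex k K) k a i) i := by
  refine Eq.trans ?_ (sum_paths_eq_chainProd_mulVec _ _ _ _)
  refine Fintype.sum_equiv (Equiv.piCongrLeft γ (cycleVertexEquiv k)).symm _ _ fun jj => ?_
  simp only [Equiv.piCongrLeft_symm_apply]
  by_cases h : jj k = i
  · rw [if_pos h, if_pos (by exact h), ← (cycleVertexEquiv k).prod_comp, Fin.prod_univ_castSucc,
      show cycleVertexEquiv k (Fin.last K) + 1 = k from cycleVertex_period k, h]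
    rfl
  · rw [if_neg h, if_neg (by exact h)]

theorem sum_cycle_marginal_eq (E : ∀ ℓ t, γ ℓ → γ t → R) (φ : ∀ ℓ, γ ℓ → R)
    (α : ∀ ℓ t, γ ℓ → γ t → R) (hK : 1 ≤ K)
    (hα1 : ∀ ℓ a b, α ℓ (ℓ + 1) a b = E ℓ (ℓ + 1) a b)
    (hα2 : ∀ ℓ t, t ≠ ℓ + 1 → t ≠ ℓ → ∀ a b,
      α ℓ t a b = ∑ c, E ℓ (ℓ + 1) a c * (φ (ℓ + 1) c * α (ℓ + 1) t c b))
    (k : Fin (K + 1)) (i : γ k) :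
    ∑ jj : (∀ ℓ, γ ℓ), (if jj k = i then ∏ ℓ, E ℓ (ℓ + 1) (jj ℓ) (jj (ℓ + 1)) * φ ℓ (jj ℓ)
      else 0)
      = φ k i * ∑ j, E k (k + 1) i j * φ (k + 1) j * α (k + 1) k j i := by
  set F : ∀ ℓ t, γ ℓ → γ t → R := fun ℓ t a b => E ℓ t a b * φ ℓ a
  set W := fun m => of (F (cycleVertex k m) (cycleVertex k (m + 1)))
  set v : ∀ m, γ (cycleVertex k m) → R := fun m a => φ _ a * α _ k a i
  have hv : ∀ m, 1 ≤ m → m < K → v m = W m *ᵥ v (m + 1) := by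
    intro m hm1 hmK
    have hm : k ≠ cycleVertex k m := fun h =>
      Nat.not_dvd_of_pos_of_lt hm1 (by omega) ((cycleVertex_eq_self_iff k m).1 h.symm)
    have hm' : k ≠ cycleVertex k m + 1 := fun h =>
      Nat.not_dvd_of_pos_of_lt m.succ_pos (by omega)
        ((cycleVertex_eq_self_iff k (m + 1)).1 h.symm)
    funext a
    simp only [v, W, mulVec, dotProduct, of_apply]
    simp only [F, hα2 _ k hm' hm, Finset.mul_sum, cycleVertex]
    exact Finset.sum_congr rfl fun c _ => by ring
  have hvK : v K = fun a => F (cycleVertex k K) k a i := by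
    have hclose := hα1 (cycleVertex k K)
    rw [show cycleVertex k K + 1 = k from cycleVertex_period k] at hclose
    funext a
    simp only [v, F, hclose, mul_comm]
  calc _ = (chainProd W K *ᵥ v K) i := by rw [hvK]; exact sum_cycle_eq_chainProd_mulVec F k i
    _ = (chainProd W 1 *ᵥ v 1) i := by rw [chainProd_mulVec_eq_of_mulVec W v hK hv]
    _ = ∑ j, F k (k + 1) i j * (φ (k + 1) j * α (k + 1) k j i) := by rw [chainProd_one]; rfl
    _ = _ := by
      simp only [F, Finset.mul_sum]
      exact Finset.sum_congr rfl fun c _ => by ring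

end Cycle

theorem exp_neg_sum_div_mul_prod {ι : Type*} [Fintype ι] (c p : ι → ℝ) (η : ℝ) :
    Real.exp (-(∑ ℓ, c ℓ) / η) * ∏ ℓ, p ℓ = ∏ ℓ, Real.exp (-c ℓ / η) * p ℓ := by
  rw [← Finset.sum_neg_distrib, Finset.sum_div, Real.exp_sum, Finset.prod_mul_distrib]

end CircleMarginal

open CircleMarginal in
theorem circle_marginal_formula_general
    (K d : ℕ) [NeZero K] (hK : 3 ≤ K) (n : Fin K → ℕ)
    (x : ∀ k, Fin (n k) → EuclideanSpace ℝ (Fin d))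
    (η : ℝ)
    (φ : ∀ k, Fin (n k) → ℝ)
    (α : ∀ (ℓ t : Fin K), Fin (n ℓ) → Fin (n t) → ℝ)
    (hα1 : ∀ (ℓ : Fin K) (a : Fin (n ℓ)) (b : Fin (n (ℓ + 1))),
      α ℓ (ℓ + 1) a b = Real.exp (-‖x ℓ a - x (ℓ + 1) b‖ ^ 2 / η))
    (hα2 : ∀ (ℓ t : Fin K), t ≠ ℓ + 1 → t ≠ ℓ →
      ∀ (a : Fin (n ℓ)) (b : Fin (n t)),
      α ℓ t a b = ∑ c : Fin (n (ℓ + 1)),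
        Real.exp (-‖x ℓ a - x (ℓ + 1) c‖ ^ 2 / η) * (φ (ℓ + 1) c * α (ℓ + 1) t c b)) :
    ∀ (k : Fin K) (i : Fin (n k)),
      (∑ jj : ∀ t, Fin (n t), if jj k = i then
          Real.exp (-(∑ ℓ, ‖x ℓ (jj ℓ) - x (ℓ + 1) (jj (ℓ + 1))‖ ^ 2) / η)
            * ∏ ℓ, φ ℓ (jj ℓ)
        else 0)
      = φ k i * ∑ j : Fin (n (k + 1)),
          Real.exp (-‖x k i - x (k + 1) j‖ ^ 2 / η) * φ (k + 1) j * α (k + 1) k j i := by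
  obtain ⟨K, rfl⟩ := Nat.exists_eq_succ_of_ne_zero (NeZero.ne K)
  intro k i
  simp only [exp_neg_sum_div_mul_prod]
  exact sum_cycle_marginal_eq (fun ℓ t a b => Real.exp (-‖x ℓ a - x t b‖ ^ 2 / η)) φ α
    (by omega) hα1 hα2 k i

theorem circle_marginal_formula
    (K d : ℕ) [NeZero K] (hK : 3 ≤ K) (n : Fin K → ℕ)
    (x : ∀ k, Fin (n k) → EuclideanSpace ℝ (Fin d))
    (η : ℝ) (hη : 0 < η)
    (φ : ∀ k, Fin (n k) → ℝ) (hφ : ∀ k j, 0 < φ k j)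
    (α : ∀ (ℓ t : Fin K), Fin (n ℓ) → Fin (n t) → ℝ)
    (hα1 : ∀ (ℓ : Fin K) (a : Fin (n ℓ)) (b : Fin (n (ℓ + 1))),
      α ℓ (ℓ + 1) a b = Real.exp (-‖x ℓ a - x (ℓ + 1) b‖ ^ 2 / η))
    (hα2 : ∀ (ℓ t : Fin K), t ≠ ℓ + 1 → t ≠ ℓ →
      ∀ (a : Fin (n ℓ)) (b : Fin (n t)),
      α ℓ t a b = ∑ c : Fin (n (ℓ + 1)),
        Real.exp (-‖x ℓ a - x (ℓ + 1) c‖ ^ 2 / η) * (φ (ℓ + 1) c * α (ℓ + 1) t c b)) :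
    ∀ (k : Fin K) (i : Fin (n k)),
      (∑ jj : ∀ t, Fin (n t), if jj k = i then
          Real.exp (-(∑ ℓ, ‖x ℓ (jj ℓ) - x (ℓ + 1) (jj (ℓ + 1))‖ ^ 2) / η)
            * ∏ ℓ, φ ℓ (jj ℓ)
        else 0)
      = φ k i * ∑ j : Fin (n (k + 1)),
          Real.exp (-‖x k i - x (k + 1) j‖ ^ 2 / η) * φ (k + 1) j * α (k + 1) k j i :=
  circle_marginal_formula_general K d hK n x η φ α hα1 hα2
end

section
/- Marginal formula for circle-structured costs via forward matrices (Theorem 4.4): in the circle-structured setting, define λ^{(1,2)} := 𝒦^{(1,2)} and recursively λ^{(1,k)} := λ^{(1,k−1)} (φ^{k−1} ⊙ 𝒦^{(k−1,k)}) for k = 3,…,K (where φ^{k−1} ⊙ A scales the rows of A), and let α^{(k,1)} ∈ ℝ^{n_k×n_1} be given by the backward recursion α^{(ℓ,1)} = 𝒦^{(ℓ,1)} if d(ℓ,1) = 1 and α^{(ℓ,1)} = 𝒦^{(ℓ,ℓ+1)}(φ^{ℓ+1} ⊙ α^{(ℓ+1,1)}) otherwise. Then [P_1(𝒦 ⊙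 Φ)]_i = φ^1_i Σ_{j=1}^{n_2} 𝒦^{(1,2)}_{i,j} φ^2_j α^{(2,1)}_{j,i} for all i ∈ [n_1], and for every k = 2,…,K and i ∈ [n_k]: [P_k(𝒦 ⊙ Φ)]_i = φ^k_i Σ_{j=1}^{n_1} α^{(k,1)}_{i,j} φ^1_j λ^{(1,k)}_{j,i}. -/
/-!
Put the atoms of all marginals into one index set, the disjoint union `Σ t, β t`, and let `W ℓ`
be the matrix whose only nonzero row block is the `ℓ`-th one, equal to `φ^ℓ ⊙ 𝒦^{(ℓ,·)}`.
Configurations with `jj k = i` are exactly the closed walks `k → k+1 → ⋯ → k` through the blocks,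
so `[P_k(𝒦 ⊙ Φ)]_i` is the diagonal entry at `(k, i)` of the cyclic product
`W k * W (k+1) * ⋯ * W (k-1)`. Cutting this product at node `0` leaves the arc from `k` to `0`
and the arc from `0` to `k`; the recursions defining `α` and `λ` are exactly the recursions of
these two partial products, which are therefore `φ^k ⊙ α^{(k,0)}` and `φ^0 ⊙ λ^{(0,k)}`.
-/

open Finset Matrix

section Arc

open Fin.NatCast

variable {ι R : Type*} [Fintype ι] [DecidableEq ι] [Semiring R] {K : ℕ} [NeZero K]

/-- `W s * W (s + 1) * ⋯ * W (s + m - 1)`, the nodes `s + r` being read mod `K`. -/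
def arcProd (W : Fin K → Matrix ι ι R) (s : Fin K) (m : ℕ) : Matrix ι ι R :=
  (List.ofFn fun r : Fin m => W (s + (r : ℕ))).prod

variable (W : Fin K → Matrix ι ι R) (s : Fin K)

theorem arcProd_add (m₁ m₂ : ℕ) :
    arcProd W s (m₁ + m₂) = arcProd W s m₁ * arcProd W (s + m₁) m₂ := by
  simp only [arcProd, List.ofFn_add, List.prod_append, Fin.val_castLE, Fin.val_natAdd,
    Nat.cast_add, add_assoc]

theorem arcProd_one : arcProd W s 1 = W s := by
  simp [arcProd]

theorem arcProd_succ (m : ℕ) : arcProd W s (m + 1) = arcProd W s m * W (s + m) := by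
  rw [arcProd_add, arcProd_one]

theorem arcProd_succ' (m : ℕ) : arcProd W s (m + 1) = W s * arcProd W (s + 1) m := by
  rw [add_comm, arcProd_add, arcProd_one, Nat.cast_one]

end Arc

section ClosedWalks

variable {ι R : Type*} [Fintype ι] [DecidableEq ι] [CommSemiring R]

theorem list_prod_ofFn_mulVec_apply {m : ℕ} (W : Fin m → Matrix ι ι R) (v : ι → R) (a : ι) :
    ((List.ofFn W).prod *ᵥ v) a = ∑ q : Fin m → ι,
      let p : Fin (m + 1) → ι := Fin.cons a q
      (∏ r : Fin m, W r (p r.castSucc) (p r.succ)) * v (p (Fin.last m)) := by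
  induction m generalizing a with
  | zero => simp
  | succ m ih =>
    rw [List.ofFn_succ, List.prod_cons, ← mulVec_mulVec, mulVec, dotProduct,
      ← (Fin.consEquiv fun _ => ι).sum_comp, Fintype.sum_prod_type]
    refine sum_congr rfl fun c _ => ?_
    rw [ih, mul_sum]
    refine sum_congr rfl fun q _ => ?_
    simp [Fin.consEquiv, Fin.prod_univ_succ, mul_assoc]

theorem sum_ite_prod_cycle_eq_arcProd {K : ℕ} [NeZero K] (W : Fin K → Matrix ι ι R) (k : Fin K)
    (i : ι) :
    ∑ p : Fin K → ι, (if p k = i then ∏ ℓ, W ℓ (p ℓ) (p (ℓ + 1)) else 0) = arcProd W k K i i := by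
  obtain ⟨N, rfl⟩ : ∃ N, K = N + 1 := ⟨K - 1, (Nat.sub_add_cancel NeZero.one_le).symm⟩
  have rotate : ∑ p : Fin (N + 1) → ι, (if p k = i then ∏ ℓ, W ℓ (p ℓ) (p (ℓ + 1)) else 0) =
      ∑ q : Fin (N + 1) → ι, if q 0 = i then ∏ r, W (k + r) (q r) (q (r + 1)) else 0 := by
    refine Fintype.sum_equiv ((Equiv.addLeft k).symm.arrowCongr (Equiv.refl ι)) _ _
      fun p => ?_
    simp only [Equiv.arrowCongr_apply, Equiv.symm_symm, Equiv.coe_addLeft, Equiv.coe_refl,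
      Function.comp_def, id, add_zero]
    rw [← Equiv.prod_comp (Equiv.addLeft k)]
    simp only [Equiv.coe_addLeft, add_assoc]
  have cons_start : ∀ F : (Fin (N + 1) → ι) → R,
      ∑ q : Fin (N + 1) → ι, (if q 0 = i then F q else 0) =
        ∑ q : Fin N → ι, F (Fin.cons i q) := by
    intro F
    rw [← (Fin.consEquiv fun _ => ι).sum_comp, Fintype.sum_prod_type]
    simp [Fin.consEquiv]
  have arc : arcProd W k (N + 1) =
      (List.ofFn fun r : Fin N => W (k + r.castSucc)).prod * W (k + Fin.last N) := by
    rw [arcProd_succ, arcProd, Fin.natCast_eq_last]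
    simp only [Fin.coe_eq_castSucc]
  rw [rotate, cons_start, arc, show ∀ A B : Matrix ι ι R, (A * B) i i = (A *ᵥ fun c => B c i) i
    from fun _ _ => rfl, list_prod_ofFn_mulVec_apply]
  refine sum_congr rfl fun q _ => ?_
  simp [Fin.prod_univ_castSucc, Fin.coeSucc_eq_succ, Fin.last_add_one]

end ClosedWalks

theorem mul_apply_eq_sum_block {R κ μ ν : Type*} [NonUnitalNonAssocSemiring R] [Fintype κ]
    [DecidableEq κ] {β : κ → Type*} [∀ t, Fintype (β t)] (A : Matrix μ (Σ t, β t) R)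
    (B : Matrix (Σ t, β t) ν R) (t : κ)
    (hB : ∀ u, u ≠ t → ∀ c y, B ⟨u, c⟩ y = 0) (x : μ) (y : ν) :
    (A * B) x y = ∑ c : β t, A x ⟨t, c⟩ * B ⟨t, c⟩ y := by
  rw [mul_apply, Fintype.sum_sigma, Fintype.sum_eq_single t]
  exact fun u hu => sum_eq_zero fun c _ => by rw [hB u hu, mul_zero]

section CycleMarginal

variable {R : Type*} [CommSemiring R] {K : ℕ} {β : Fin K → Type*}
  (G : ∀ s t, β s → β t → R) (φ : ∀ t, β t → R)

def transferMatrix (ℓ : Fin K) : Matrix (Σ t, β t) (Σ t, β t) R :=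
  Matrix.of fun x y => if x.1 = ℓ then φ x.1 x.2 * G x.1 y.1 x.2 y.2 else 0

@[simp]
theorem transferMatrix_apply_mk (ℓ : Fin K) (a : β ℓ) (y : Σ t, β t) :
    transferMatrix G φ ℓ ⟨ℓ, a⟩ y = φ ℓ a * G ℓ y.1 a y.2 := by
  simp [transferMatrix]

theorem transferMatrix_apply_of_ne {ℓ : Fin K} {x : Σ t, β t} (h : x.1 ≠ ℓ) (y : Σ t, β t) :
    transferMatrix G φ ℓ x y = 0 := by
  simp [transferMatrix, h]

variable [NeZero K] [∀ t, Fintype (β t)] [∀ t, DecidableEq (β t)]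

theorem arcProd_transferMatrix_apply_of_ne {s : Fin K} {x : Σ t, β t} (h : x.1 ≠ s) {m : ℕ}
    (hm : m ≠ 0) (y : Σ t, β t) : arcProd (transferMatrix G φ) s m x y = 0 := by
  obtain ⟨m, rfl⟩ := Nat.exists_eq_succ_of_ne_zero hm
  rw [arcProd_succ', mul_apply]
  exact sum_eq_zero fun z _ => by rw [transferMatrix_apply_of_ne G φ h, zero_mul]

theorem sum_ite_prod_cycle_eq_arcProd_transferMatrix (k : Fin K) (i : β k) :
    ∑ jj : ∀ t, β t,
        (if jj k = i then ∏ ℓ, φ ℓ (jj ℓ) * G ℓ (ℓ + 1) (jj ℓ) (jj (ℓ + 1)) else 0) =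
      arcProd (transferMatrix G φ) k K ⟨k, i⟩ ⟨k, i⟩ := by
  rw [← sum_ite_prod_cycle_eq_arcProd]
  refine Fintype.sum_of_injective (fun jj t => ⟨t, jj t⟩)
    (fun jj jj' h => funext fun t => sigma_mk_injective (congrFun h t)) _ _ ?_ fun jj => ?_
  · intro p hp
    obtain ⟨ℓ, hℓ⟩ : ∃ ℓ, (p ℓ).1 ≠ ℓ := by
      by_contra! h
      exact hp ⟨_, congrArg Subtype.val
        ((Equiv.piEquivSubtypeSigma _ β).apply_symm_apply ⟨p, h⟩)⟩
    rw [prod_eq_zero (mem_univ ℓ) (transferMatrix_apply_of_ne G φ hℓ _), ite_self]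
  · simp [sigma_mk_injective.eq_iff]

theorem arcProd_transferMatrix_apply_to_zero (α : ∀ ℓ, β ℓ → β 0 → R)
    (hαlast : ∀ ℓ : Fin K, ℓ + 1 = 0 → ∀ a b, α ℓ a b = G ℓ 0 a b)
    (hαrec : ∀ ℓ : Fin K, ℓ + 1 ≠ 0 → ℓ ≠ 0 → ∀ a b,
      α ℓ a b = ∑ c, G ℓ (ℓ + 1) a c * (φ (ℓ + 1) c * α (ℓ + 1) c b))
    {ℓ : Fin K} (hℓ : ℓ ≠ 0) (a : β ℓ) (b : β 0) :
    arcProd (transferMatrix G φ) ℓ (K - ℓ) ⟨ℓ, a⟩ ⟨0, b⟩ = φ ℓ a * α ℓ a b := by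
  suffices key : ∀ d, ∀ ℓ : Fin K, ℓ ≠ 0 → ℓ.val + (d + 1) = K → ∀ a b,
      arcProd (transferMatrix G φ) ℓ (d + 1) ⟨ℓ, a⟩ ⟨0, b⟩ = φ ℓ a * α ℓ a b by
    obtain ⟨d, hd⟩ : ∃ d, K - ℓ = d + 1 := ⟨K - ℓ - 1, by omega⟩
    rw [hd]
    exact key d ℓ hℓ (by omega) a b
  intro d
  induction d with
  | zero =>
    intro ℓ _ hℓK a b
    have hlast : ℓ + 1 = 0 := Fin.ext <| by
      rw [Fin.val_add, Fin.val_one', Nat.add_mod_mod, hℓK, Nat.mod_self, Fin.val_zero]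
    rw [arcProd_one, transferMatrix_apply_mk, hαlast ℓ hlast]
  | succ d ih =>
    intro ℓ hℓ hℓK a b
    have hsucc : (ℓ + 1).val = ℓ.val + 1 := Fin.val_add_one_of_lt' (by omega)
    have hsucc0 : ℓ + 1 ≠ 0 := Fin.ne_of_val_ne (by rw [hsucc, Fin.val_zero]; omega)
    rw [arcProd_succ', mul_apply_eq_sum_block _ _ (ℓ + 1)
      fun u hu _ _ => arcProd_transferMatrix_apply_of_ne G φ hu d.succ_ne_zero _,
      hαrec ℓ hsucc0 hℓ, mul_sum]
    refine sum_congr rfl fun c _ => ?_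
    rw [ih (ℓ + 1) hsucc0 (by omega), transferMatrix_apply_mk]
    ring

open Fin.NatCast in
theorem arcProd_transferMatrix_apply_from_zero (lam : ∀ k, β 0 → β k → R)
    (hlam1 : ∀ a b, lam 1 a b = G 0 1 a b)
    (hlamrec : ∀ k : Fin K, 2 ≤ k.val → ∀ a b,
      lam k a b = ∑ c, lam (k - 1) a c * (φ (k - 1) c * G (k - 1) k c b))
    {k : Fin K} (hk : k ≠ 0) (a : β 0) (b : β k) :
    arcProd (transferMatrix G φ) 0 k ⟨0, a⟩ ⟨k, b⟩ = φ 0 a * lam k a b := by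
  suffices key : ∀ m, ∀ k : Fin K, k.val = m + 1 → ∀ b : β k,
      arcProd (transferMatrix G φ) 0 (m + 1) ⟨0, a⟩ ⟨k, b⟩ = φ 0 a * lam k a b by
    have hpos : k.val ≠ 0 := Fin.val_ne_zero_iff.2 hk
    simpa only [Nat.sub_add_cancel (Nat.one_le_iff_ne_zero.2 hpos)] using
      key (k.val - 1) k (by omega) b
  intro m
  induction m with
  | zero =>
    intro k hk b
    obtain rfl : k = 1 := Fin.ext <| by rw [hk, Fin.val_one', Nat.mod_eq_of_lt (by omega)]
    rw [zero_add, arcProd_one, transferMatrix_apply_mk, hlam1]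
  | succ m ih =>
    intro k hk b
    have hk1 : k - 1 = ((m + 1 : ℕ) : Fin K) := by
      have : k = ((m + 1 + 1 : ℕ) : Fin K) :=
        Fin.ext (by rw [Fin.val_cast_of_lt (by omega), hk])
      rw [this, Nat.cast_succ, add_sub_cancel_right]
    rw [arcProd_succ, zero_add, mul_apply_eq_sum_block _ _ ((m + 1 : ℕ) : Fin K)
      fun u hu _ _ => transferMatrix_apply_of_ne G φ hu _, hlamrec k (by omega), hk1, mul_sum]
    refine sum_congr rfl fun c _ => ?_
    rw [ih _ (Fin.val_cast_of_lt (by omega)), transferMatrix_apply_mk]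
    ring

theorem cycle_marginal_zero_eq (hK : 2 ≤ K) (α : ∀ ℓ, β ℓ → β 0 → R)
    (hαlast : ∀ ℓ : Fin K, ℓ + 1 = 0 → ∀ a b, α ℓ a b = G ℓ 0 a b)
    (hαrec : ∀ ℓ : Fin K, ℓ + 1 ≠ 0 → ℓ ≠ 0 → ∀ a b,
      α ℓ a b = ∑ c, G ℓ (ℓ + 1) a c * (φ (ℓ + 1) c * α (ℓ + 1) c b))
    (i : β 0) :
    ∑ jj : ∀ t, β t,
        (if jj 0 = i then ∏ ℓ, φ ℓ (jj ℓ) * G ℓ (ℓ + 1) (jj ℓ) (jj (ℓ + 1)) else 0) =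
      φ 0 i * ∑ j, G 0 1 i j * φ 1 j * α 1 j i := by
  have hval1 : (1 : Fin K).val = 1 := by rw [Fin.val_one', Nat.mod_eq_of_lt hK]
  have hsplit : arcProd (transferMatrix G φ) 0 K =
      transferMatrix G φ 0 * arcProd (transferMatrix G φ) 1 (K - 1) := by
    simpa only [Nat.sub_add_cancel (by omega : 1 ≤ K), zero_add] using
      arcProd_succ' (transferMatrix G φ) 0 (K - 1)
  rw [sum_ite_prod_cycle_eq_arcProd_transferMatrix, hsplit, mul_apply_eq_sum_block _ _ 1
    fun u hu _ _ => arcProd_transferMatrix_apply_of_ne G φ hu (by omega) _, mul_sum]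
  refine sum_congr rfl fun j _ => ?_
  have hback := arcProd_transferMatrix_apply_to_zero G φ α hαlast hαrec
    (Fin.ne_of_val_ne (by rw [hval1, Fin.val_zero]; omega)) j i
  rw [hval1] at hback
  rw [hback, transferMatrix_apply_mk]
  ring

open Fin.NatCast in
theorem cycle_marginal_eq_of_ne_zero (α : ∀ ℓ, β ℓ → β 0 → R)
    (hαlast : ∀ ℓ : Fin K, ℓ + 1 = 0 → ∀ a b, α ℓ a b = G ℓ 0 a b)
    (hαrec : ∀ ℓ : Fin K, ℓ + 1 ≠ 0 → ℓ ≠ 0 → ∀ a b,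
      α ℓ a b = ∑ c, G ℓ (ℓ + 1) a c * (φ (ℓ + 1) c * α (ℓ + 1) c b))
    (lam : ∀ k, β 0 → β k → R)
    (hlam1 : ∀ a b, lam 1 a b = G 0 1 a b)
    (hlamrec : ∀ k : Fin K, 2 ≤ k.val → ∀ a b,
      lam k a b = ∑ c, lam (k - 1) a c * (φ (k - 1) c * G (k - 1) k c b))
    {k : Fin K} (hk : k ≠ 0) (i : β k) :
    ∑ jj : ∀ t, β t,
        (if jj k = i then ∏ ℓ, φ ℓ (jj ℓ) * G ℓ (ℓ + 1) (jj ℓ) (jj (ℓ + 1)) else 0) =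
      φ k i * ∑ j, α k i j * φ 0 j * lam k j i := by
  have hnode : k + ((K - k.val : ℕ) : Fin K) = 0 := Fin.ext <| by
    rw [Fin.val_add, Fin.coe_natCast_eq_mod, Nat.add_mod_mod, Nat.add_sub_cancel' k.isLt.le,
      Nat.mod_self, Fin.val_zero]
  have hsplit := arcProd_add (transferMatrix G φ) k (K - k.val) k.val
  rw [Nat.sub_add_cancel k.isLt.le, hnode] at hsplit
  rw [sum_ite_prod_cycle_eq_arcProd_transferMatrix, hsplit, mul_apply_eq_sum_block _ _ 0
    fun u hu _ _ => arcProd_transferMatrix_apply_of_ne G φ hu (Fin.val_ne_zero_iff.2 hk) _,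
    mul_sum]
  refine sum_congr rfl fun j _ => ?_
  rw [arcProd_transferMatrix_apply_to_zero G φ α hαlast hαrec hk,
    arcProd_transferMatrix_apply_from_zero G φ lam hlam1 hlamrec hk]
  ring

end CycleMarginal

theorem circle_marginal_formula_forward_matrices_general
    (K d : ℕ) [NeZero K] (hK : 3 ≤ K) (n : Fin K → ℕ)
    (x : ∀ k, Fin (n k) → EuclideanSpace ℝ (Fin d))
    (η : ℝ)
    (φ : ∀ k, Fin (n k) → ℝ)
    (α : ∀ ℓ : Fin K, Fin (n ℓ) → Fin (n 0) → ℝ)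
    (hαlast : ∀ ℓ : Fin K, ℓ + 1 = 0 → ∀ (a : Fin (n ℓ)) (b : Fin (n 0)),
      α ℓ a b = Real.exp (-‖x ℓ a - x 0 b‖ ^ 2 / η))
    (hαrec : ∀ ℓ : Fin K, ℓ + 1 ≠ 0 → ℓ ≠ 0 → ∀ (a : Fin (n ℓ)) (b : Fin (n 0)),
      α ℓ a b = ∑ c : Fin (n (ℓ + 1)),
        Real.exp (-‖x ℓ a - x (ℓ + 1) c‖ ^ 2 / η) * (φ (ℓ + 1) c * α (ℓ + 1) c b))
    (lam : ∀ k : Fin K, Fin (n 0) → Fin (n k) → ℝ)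
    (hlam1 : ∀ (a : Fin (n 0)) (b : Fin (n 1)),
      lam 1 a b = Real.exp (-‖x 0 a - x 1 b‖ ^ 2 / η))
    (hlamrec : ∀ k : Fin K, 2 ≤ k.val → ∀ (a : Fin (n 0)) (b : Fin (n k)),
      lam k a b = ∑ c : Fin (n (k - 1)),
        lam (k - 1) a c * (φ (k - 1) c * Real.exp (-‖x (k - 1) c - x k b‖ ^ 2 / η))) :
    (∀ i : Fin (n 0),
      (∑ jj : ∀ t, Fin (n t), if jj 0 = i then
          Real.exp (-(∑ ℓ, ‖x ℓ (jj ℓ) - x (ℓ + 1) (jj (ℓ + 1))‖ ^ 2) / η)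
            * ∏ ℓ, φ ℓ (jj ℓ)
        else 0)
      = φ 0 i * ∑ j : Fin (n 1),
          Real.exp (-‖x 0 i - x 1 j‖ ^ 2 / η) * φ 1 j * α 1 j i) ∧
    (∀ k : Fin K, k ≠ 0 → ∀ i : Fin (n k),
      (∑ jj : ∀ t, Fin (n t), if jj k = i then
          Real.exp (-(∑ ℓ, ‖x ℓ (jj ℓ) - x (ℓ + 1) (jj (ℓ + 1))‖ ^ 2) / η)
            * ∏ ℓ, φ ℓ (jj ℓ)
        else 0)
      = φ k i * ∑ j : Fin (n 0), α k i j * φ 0 j * lam k j i) := by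
  let G : ∀ s t, Fin (n s) → Fin (n t) → ℝ := fun s t a b =>
    Real.exp (-‖x s a - x t b‖ ^ 2 / η)
  have weight : ∀ jj : ∀ t, Fin (n t),
      Real.exp (-(∑ ℓ, ‖x ℓ (jj ℓ) - x (ℓ + 1) (jj (ℓ + 1))‖ ^ 2) / η) * ∏ ℓ, φ ℓ (jj ℓ) =
        ∏ ℓ, φ ℓ (jj ℓ) * G ℓ (ℓ + 1) (jj ℓ) (jj (ℓ + 1)) := fun jj => by
    rw [prod_mul_distrib, mul_comm, neg_div, sum_div, ← sum_neg_distrib, Real.exp_sum]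
    simp only [G, neg_div]
  simp only [weight]
  exact ⟨cycle_marginal_zero_eq G φ (by omega) α hαlast hαrec,
    fun k hk => cycle_marginal_eq_of_ne_zero G φ α hαlast hαrec lam hlam1 hlamrec hk⟩

theorem circle_marginal_formula_forward_matrices
    (K d : ℕ) [NeZero K] (hK : 3 ≤ K) (n : Fin K → ℕ)
    (x : ∀ k, Fin (n k) → EuclideanSpace ℝ (Fin d))
    (η : ℝ) (hη : 0 < η)
    (φ : ∀ k, Fin (n k) → ℝ) (hφ : ∀ k j, 0 < φ k j)
    (α : ∀ ℓ : Fin K, Fin (n ℓ) → Fin (n 0) → ℝ)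
    (hαlast : ∀ ℓ : Fin K, ℓ + 1 = 0 → ∀ (a : Fin (n ℓ)) (b : Fin (n 0)),
      α ℓ a b = Real.exp (-‖x ℓ a - x 0 b‖ ^ 2 / η))
    (hαrec : ∀ ℓ : Fin K, ℓ + 1 ≠ 0 → ℓ ≠ 0 → ∀ (a : Fin (n ℓ)) (b : Fin (n 0)),
      α ℓ a b = ∑ c : Fin (n (ℓ + 1)),
        Real.exp (-‖x ℓ a - x (ℓ + 1) c‖ ^ 2 / η) * (φ (ℓ + 1) c * α (ℓ + 1) c b))
    (lam : ∀ k : Fin K, Fin (n 0) → Fin (n k) → ℝ)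
    (hlam1 : ∀ (a : Fin (n 0)) (b : Fin (n 1)),
      lam 1 a b = Real.exp (-‖x 0 a - x 1 b‖ ^ 2 / η))
    (hlamrec : ∀ k : Fin K, 2 ≤ k.val → ∀ (a : Fin (n 0)) (b : Fin (n k)),
      lam k a b = ∑ c : Fin (n (k - 1)),
        lam (k - 1) a c * (φ (k - 1) c * Real.exp (-‖x (k - 1) c - x k b‖ ^ 2 / η))) :
    (∀ i : Fin (n 0),
      (∑ jj : ∀ t, Fin (n t), if jj 0 = i then
          Real.exp (-(∑ ℓ, ‖x ℓ (jj ℓ) - x (ℓ + 1) (jj (ℓ + 1))‖ ^ 2) / η)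
            * ∏ ℓ, φ ℓ (jj ℓ)
        else 0)
      = φ 0 i * ∑ j : Fin (n 1),
          Real.exp (-‖x 0 i - x 1 j‖ ^ 2 / η) * φ 1 j * α 1 j i) ∧
    (∀ k : Fin K, k ≠ 0 → ∀ i : Fin (n k),
      (∑ jj : ∀ t, Fin (n t), if jj k = i then
          Real.exp (-(∑ ℓ, ‖x ℓ (jj ℓ) - x (ℓ + 1) (jj (ℓ + 1))‖ ^ 2) / η)
            * ∏ ℓ, φ ℓ (jj ℓ)
        else 0)
      = φ k i * ∑ j : Fin (n 0), α k i j * φ 0 j * lam k j i) :=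
  circle_marginal_formula_forward_matrices_general K d hK n x η φ α hαlast hαrec lam hlam1 hlamrec
end

section
/- Gradient characterization of critical points of the Sinkhorn function: for entrywise positive dual vectors φ^k ∈ ℝ^{n_k}, the partial derivative of the Sinkhorn function satisfies ∂S/∂φ^k_j (φ¹,…,φ^K) = (η/φ^k_j) ( μ^k_j − [P_k(𝒦 ⊙ Φ)]_j ) for all k ∈ [K] and j ∈ [n_k]. Consequently, the gradient of S vanishes at an entrywise positive point (φ¹,…,φ^K) if and only if P_k(𝒦 ⊙ Φ) = μ^k for every k ∈ [K], i.e. if and only if the plan 𝒦 ⊙ Φ is admissible. -/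
/-!
Moving the single coordinate `φᵏⱼ` to `t` turns the entropy term into `μᵏⱼ log t` plus a
constant, and each monomial `𝒦ᵢ Φᵢ` is either constant in `t` (when `iₖ ≠ j`) or linear in `t`
with slope `𝒦ᵢ Φᵢ / φᵏⱼ`. Hence the partial derivative of the multilinear term is the
`k`-th marginal at `j` divided by `φᵏⱼ`, and since `η / φᵏⱼ ≠ 0` the gradient vanishes exactly
when every marginal equals `μᵏ`.
-/

open Finset Function Real

@[to_additive]
theorem Fintype.prod_apply_update {ι M : Type*} [Fintype ι] [DecidableEq ι] [CommMonoid M]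
    {α : ι → Type*} (G : ∀ i, α i → M) (x : ∀ i, α i) (i : ι) (y : α i) :
    ∏ i', G i' (update x i y i') = G i y * ∏ i' ∈ univ.erase i, G i' (x i') := by
  rw [← mul_prod_erase univ _ (mem_univ i), update_self]
  refine congrArg _ (Finset.prod_congr rfl fun i' hi' => ?_)
  rw [update_of_ne (ne_of_mem_erase hi')]

section

variable {ι : Type*} [Fintype ι] [DecidableEq ι] {α : ι → Type*}
  [∀ k, Fintype (α k)] [∀ k, DecidableEq (α k)]

theorem hasDerivAt_sum_sum_mul_log_update (μ x : ∀ k, α k → ℝ) (k : ι) (j : α k) {t : ℝ}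
    (ht : t ≠ 0) :
    HasDerivAt (fun s => ∑ k', ∑ j', μ k' j' * log (update x k (update (x k) j s) k' j'))
      (μ k j / t) t := by
  set c := (∑ j' ∈ univ.erase j, μ k j' * log (x k j')) +
    ∑ k' ∈ univ.erase k, ∑ j', μ k' j' * log (x k' j')
  have hsplit : (fun s => ∑ k', ∑ j', μ k' j' * log (update x k (update (x k) j s) k' j')) =
      fun s => μ k j * log s + c := by
    funext s
    rw [Fintype.sum_apply_update (fun k' (v : α k' → ℝ) => ∑ j', μ k' j' * log (v j')),
      Fintype.sum_apply_update (fun j' (v : ℝ) => μ k j' * log v), add_assoc]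
  rw [hsplit, div_eq_mul_inv]
  exact ((hasDerivAt_log ht).const_mul _).add_const c

theorem hasDerivAt_sum_mul_prod_update (w : (∀ k, α k) → ℝ) (x : ∀ k, α k → ℝ) (k : ι)
    (j : α k) (hx : x k j ≠ 0) :
    HasDerivAt (fun t => ∑ i, w i * ∏ k', update x k (update (x k) j t) k' (i k'))
      ((∑ i, if i k = j then w i * ∏ k', x k' (i k') else 0) / x k j) (x k j) := by
  have hterm : ∀ i : ∀ k, α k,
      HasDerivAt (fun t => w i * ∏ k', update x k (update (x k) j t) k' (i k'))
        (w i * ((Pi.single j 1 : α k → ℝ) (i k) * ∏ k' ∈ univ.erase k, x k' (i k'))) (x k j) := by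
    intro i
    simp_rw [Fintype.prod_apply_update (fun k' (v : α k' → ℝ) => v (i k'))]
    exact ((hasDerivAt_pi.1 (hasDerivAt_update (x k) j (x k j)) (i k)).mul_const _).const_mul _
  refine (HasDerivAt.fun_sum fun i _ => hterm i).congr_deriv ?_
  rw [eq_div_iff hx, sum_mul]
  refine sum_congr rfl fun i _ => ?_
  by_cases h : i k = j
  · subst h
    rw [if_pos rfl, Pi.single_eq_same, ← mul_prod_erase univ (fun k' => x k' (i k')) (mem_univ k)]
    ring
  · rw [if_neg h, Pi.single_eq_of_ne h]
    ring

end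

theorem sinkhorn_gradient_characterization_general
    (K : ℕ) (n : Fin K → ℕ)
    (μ : ∀ k, Fin (n k) → ℝ)
    (C : (∀ k, Fin (n k)) → ℝ)
    (η : ℝ) (hη : 0 < η)
    (φ : ∀ k, Fin (n k) → ℝ) (hφ : ∀ k j, 0 < φ k j) :
    (∀ (k : Fin K) (j : Fin (n k)),
      HasDerivAt
        (fun t : ℝ =>
          η * (∑ k', ∑ j', μ k' j' *
              Real.log (Function.update φ k (Function.update (φ k) j t) k' j'))
          - η * (∑ i : ∀ k', Fin (n k'), Real.exp (-C i / η) *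
              ∏ k', Function.update φ k (Function.update (φ k) j t) k' (i k')))
        ((η / φ k j) * (μ k j -
          ∑ i : ∀ k', Fin (n k'),
            if i k = j then Real.exp (-C i / η) * ∏ k', φ k' (i k') else 0))
        (φ k j)) ∧
    ((∀ (k : Fin K) (j : Fin (n k)),
        (η / φ k j) * (μ k j -
          ∑ i : ∀ k', Fin (n k'),
            if i k = j then Real.exp (-C i / η) * ∏ k', φ k' (i k') else 0) = 0) ↔
      (∀ (k : Fin K) (j : Fin (n k)),
        (∑ i : ∀ k', Fin (n k'),
          if i k = j then Real.exp (-C i / η) * ∏ k', φ k' (i k') else 0) = μ k j)) := by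
  refine ⟨fun k j => ?_, forall₂_congr fun k j => ?_⟩
  · have hlog := hasDerivAt_sum_sum_mul_log_update μ φ k j (hφ k j).ne'
    have hprod := hasDerivAt_sum_mul_prod_update (fun i => exp (-C i / η)) φ k j (hφ k j).ne'
    refine ((hlog.const_mul η).sub (hprod.const_mul η)).congr_deriv ?_
    ring
  · rw [mul_eq_zero, or_iff_right (div_ne_zero hη.ne' (hφ k j).ne'), sub_eq_zero, eq_comm]

theorem sinkhorn_gradient_characterization
    (K : ℕ) (n : Fin K → ℕ)
    (μ : ∀ k, Fin (n k) → ℝ)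
    (hμ0 : ∀ k j, 0 ≤ μ k j) (hμ1 : ∀ k, ∑ j, μ k j = 1)
    (C : (∀ k, Fin (n k)) → ℝ) (hC : ∀ i, 0 ≤ C i)
    (η : ℝ) (hη : 0 < η)
    (φ : ∀ k, Fin (n k) → ℝ) (hφ : ∀ k j, 0 < φ k j) :
    (∀ (k : Fin K) (j : Fin (n k)),
      HasDerivAt
        (fun t : ℝ =>
          η * (∑ k', ∑ j', μ k' j' *
              Real.log (Function.update φ k (Function.update (φ k) j t) k' j'))
          - η * (∑ i : ∀ k', Fin (n k'), Real.exp (-C i / η) *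
              ∏ k', Function.update φ k (Function.update (φ k) j t) k' (i k')))
        ((η / φ k j) * (μ k j -
          ∑ i : ∀ k', Fin (n k'),
            if i k = j then Real.exp (-C i / η) * ∏ k', φ k' (i k') else 0))
        (φ k j)) ∧
    ((∀ (k : Fin K) (j : Fin (n k)),
        (η / φ k j) * (μ k j -
          ∑ i : ∀ k', Fin (n k'),
            if i k = j then Real.exp (-C i / η) * ∏ k', φ k' (i k') else 0) = 0) ↔
      (∀ (k : Fin K) (j : Fin (n k)),
        (∑ i : ∀ k', Fin (n k'),
          if i k = j then Real.exp (-C i / η) * ∏ k', φ k' (i k') else 0) = μ k j)) :=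
  sinkhorn_gradient_characterization_general K n μ C η hη φ hφ
end
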